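/- arXiv:1206.0525 — 7 statements merged into one kernel-verified Lean document; each statement's English description precedes it below -/
import Mathlib

section
/- Let U ⊆ ℂ be open and let g : U → ℂ be holomorphic. Define E : U → ℝ by E(z) = 1 + |g'(z)|², regarded as a function of the real coordinates (x,y) with z = x + iy. Then at every point of U one has E_{xx} + E_{yy} = 4|g''|², E_x² + E_y² = 4|g'|²·|g''|², and consequently E·(E_{xx} + E_{yy}) − (E_x² + E_y²) = 4|g''|²; in particular (1/(2E³))·[E·(E_{xx}+E_{yy}) − (E_x²+E_y²)] = 2|g''|²/E³. -/
/-!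
Write `p = g'`, `q = g''`, `r = g'''`. Differentiating `|F|² = Re(conj F · F)` for holomorphic `F`
in a real direction `v` gives `∂_v E = 2 Re(conj p · q v)` and
`∂_v² E = 2 Re(|q v|² + conj p · r v²)`. Taking `v = 1` and `v = i`, the terms in `r` cancel
because `i² = -1`, leaving `E_xx + E_yy = 4|q|²`, while `E_x` and `E_y` are twice the real and
minus the imaginary part of `conj p · q`, so `E_x² + E_y² = 4|p|²|q|²`.
-/

open Complex ComplexConjugate

section DirectionalDerivative

variable {F G : ℂ → ℂ} {z b c : ℂ}

theorem HasDerivAt.fderiv_re_conj_mul_apply (hF : HasDerivAt F b z) (hG : HasDerivAt G c z)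
    (v : ℂ) :
    fderiv ℝ (fun w => (conj (F w) * G w).re) z v
      = (conj (b * v) * G z + conj (F z) * (c * v)).re := by
  have hconjF := conjCLE.toContinuousLinearMap.hasFDerivAt.comp z
    (hF.hasFDerivAt.restrictScalars ℝ)
  have hre : HasFDerivAt (fun w => (conj (F w) * G w).re) _ z :=
    reCLM.hasFDerivAt.comp z (hconjF.mul (hG.hasFDerivAt.restrictScalars ℝ))
  rw [hre.fderiv]
  simp
  ring

theorem HasDerivAt.fderiv_norm_sq_apply (hF : HasDerivAt F b z) (v : ℂ) :
    fderiv ℝ (fun w => ‖F w‖ ^ 2) z v = (conj (F z) * (2 * b * v)).re := by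
  have hnorm : (fun w => ‖F w‖ ^ 2) = fun w => (conj (F w) * F w).re := by
    funext w
    rw [conj_mul', ← ofReal_pow, ofReal_re]
  rw [hnorm, hF.fderiv_re_conj_mul_apply hF]
  simp only [add_re, mul_re, mul_im, conj_re, conj_im, re_ofNat, im_ofNat]
  ring

end DirectionalDerivative

section Holomorphic

variable {U : Set ℂ} {g : ℂ → ℂ} {z : ℂ}

theorem fderiv_one_add_norm_sq_deriv_apply (hU : IsOpen U) (hg : DifferentiableOn ℂ g U)
    (hz : z ∈ U) (v : ℂ) :
    fderiv ℝ (fun w => 1 + ‖deriv g w‖ ^ 2) z v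
      = (conj (deriv g z) * (2 * deriv (deriv g) z * v)).re := by
  have hg' := (hg.analyticOnNhd hU).deriv z hz
  rw [fderiv_const_add, hg'.differentiableAt.hasDerivAt.fderiv_norm_sq_apply]

theorem fderiv_fderiv_one_add_norm_sq_deriv_apply (hU : IsOpen U)
    (hg : DifferentiableOn ℂ g U) (hz : z ∈ U) (v : ℂ) :
    fderiv ℝ (fun w => fderiv ℝ (fun w => 1 + ‖deriv g w‖ ^ 2) w v) z v
      = (conj (deriv (deriv g) z * v) * (2 * deriv (deriv g) z * v)
          + conj (deriv g z) * (2 * deriv (deriv (deriv g)) z * v * v)).re := by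
  have hg' := (hg.analyticOnNhd hU).deriv
  have hfirst : (fun w => fderiv ℝ (fun w => 1 + ‖deriv g w‖ ^ 2) w v)
      =ᶠ[nhds z] fun w => (conj (deriv g w) * (2 * deriv (deriv g) w * v)).re := by
    filter_upwards [hU.mem_nhds hz] with w hw
    exact fderiv_one_add_norm_sq_deriv_apply hU hg hw v
  have hg'' := ((hg'.deriv z hz).differentiableAt.hasDerivAt.const_mul 2).mul_const v
  rw [hfirst.fderiv_eq, (hg' z hz).differentiableAt.hasDerivAt.fderiv_re_conj_mul_apply hg'' v]

end Holomorphic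

/-- For `g` holomorphic on an open set `U ⊆ ℂ`, the function
`E(z) = 1 + |g'(z)|²` (viewed as a function of the real coordinates of `z`)
satisfies `E_{xx} + E_{yy} = 4|g''|²`, `E_x² + E_y² = 4|g'|²|g''|²`, hence
`E(E_{xx}+E_{yy}) − (E_x²+E_y²) = 4|g''|²` and
`(1/(2E³))·[E(E_{xx}+E_{yy}) − (E_x²+E_y²)] = 2|g''|²/E³` on `U`. -/
theorem stmt0 (U : Set ℂ) (hU : IsOpen U) (g : ℂ → ℂ)
    (hg : DifferentiableOn ℂ g U)
    (E : ℂ → ℝ) (hE : ∀ z, E z = 1 + ‖deriv g z‖ ^ 2)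
    (Ex Ey Exx Eyy : ℂ → ℝ)
    (hEx : ∀ z, Ex z = fderiv ℝ E z 1)
    (hEy : ∀ z, Ey z = fderiv ℝ E z Complex.I)
    (hExx : ∀ z, Exx z = fderiv ℝ Ex z 1)
    (hEyy : ∀ z, Eyy z = fderiv ℝ Ey z Complex.I) :
    ∀ z ∈ U,
      Exx z + Eyy z = 4 * ‖deriv (deriv g) z‖ ^ 2 ∧
      (Ex z) ^ 2 + (Ey z) ^ 2 =
        4 * ‖deriv g z‖ ^ 2 * ‖deriv (deriv g) z‖ ^ 2 ∧
      E z * (Exx z + Eyy z) - ((Ex z) ^ 2 + (Ey z) ^ 2) =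
        4 * ‖deriv (deriv g) z‖ ^ 2 ∧
      1 / (2 * (E z) ^ 3) *
          (E z * (Exx z + Eyy z) - ((Ex z) ^ 2 + (Ey z) ^ 2)) =
        2 * ‖deriv (deriv g) z‖ ^ 2 / (E z) ^ 3 := by
  intro z hz
  obtain rfl : E = fun w => 1 + ‖deriv g w‖ ^ 2 := funext hE
  have hEx' : Ex = fun w => fderiv ℝ _ w 1 := funext hEx
  have hEy' : Ey = fun w => fderiv ℝ _ w I := funext hEy
  have hLaplacian : Exx z + Eyy z = 4 * ‖deriv (deriv g) z‖ ^ 2 := by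
    rw [hExx, hEyy, hEx', hEy', fderiv_fderiv_one_add_norm_sq_deriv_apply hU hg hz,
      fderiv_fderiv_one_add_norm_sq_deriv_apply hU hg hz, Complex.sq_norm, normSq_apply]
    simp only [add_re, mul_re, mul_im, conj_re, conj_im, re_ofNat, im_ofNat, one_re, one_im,
      I_re, I_im]
    ring
  have hGradient :
      (Ex z) ^ 2 + (Ey z) ^ 2 = 4 * ‖deriv g z‖ ^ 2 * ‖deriv (deriv g) z‖ ^ 2 := by
    rw [hEx, hEy, fderiv_one_add_norm_sq_deriv_apply hU hg hz,
      fderiv_one_add_norm_sq_deriv_apply hU hg hz, Complex.sq_norm, Complex.sq_norm, normSq_apply,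
      normSq_apply]
    simp only [mul_re, mul_im, conj_re, conj_im, re_ofNat, im_ofNat, one_re, one_im, I_re, I_im]
    ring
  have hCurvature : (1 + ‖deriv g z‖ ^ 2) * (Exx z + Eyy z) - ((Ex z) ^ 2 + (Ey z) ^ 2)
      = 4 * ‖deriv (deriv g) z‖ ^ 2 := by
    rw [hLaplacian, hGradient]
    ring
  refine ⟨hLaplacian, hGradient, hCurvature, ?_⟩
  rw [hCurvature]
  field_simp
  ring
end

section
/- Let p = (z₀, w₀) ∈ ℂ² and c ∈ ℂ. Suppose f is holomorphic on a neighborhood of p in ℂ², μ is holomorphic on a neighborhood of p, g is holomorphic on a neighborhood of 0 ∈ ℂ with g(0) = 0, and f(z,w) − c = μ(z,w)·[(w − w₀) − g(z − z₀)] holds on a neighborhood of p, with μ(p) ≠ 0. Then f_z(p) = −μ(p)·g'(0), f_w(p) = μ(p), and Δ_f(p) = μ(p)³·g''(0). -/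
/-!
Put `φ(z, w) = (w - w₀) - g(z - z₀)`, so that `f = c + μ φ` near `p` and `φ(p) = 0`. The first
partials are `f_z = μ φ_z + φ μ_z` and `f_w = μ φ_w + φ μ_w`, with `φ_z = -g'`, `φ_w = 1`.
Differentiating once more at `p`, a product `φ M` with `M` merely continuous contributes
`M(p) dφ(p)`, because `φ(p) = 0`. Continuity of `μ_z` and `μ_w` holds because the slices
`ζ ↦ μ(ζ, w)` converge locally uniformly as `w → w₀`, hence so do their derivatives. This gives
`f_zz = -2 g' μ_z - μ g''`, `f_zw = μ_z - g' μ_w`, `f_ww = 2 μ_w` at `p`, and `Δ_f(p)` collapses to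
`μ³ g''(0)`.
-/

/-- Partial derivative `∂f/∂z` of a function of two complex variables. -/
noncomputable def pz (f : ℂ × ℂ → ℂ) (q : ℂ × ℂ) : ℂ := fderiv ℂ f q (1, 0)

/-- Partial derivative `∂f/∂w` of a function of two complex variables. -/
noncomputable def pw (f : ℂ × ℂ → ℂ) (q : ℂ × ℂ) : ℂ := fderiv ℂ f q (0, 1)

/-- `Δ_f = 2 f_z f_w f_zw − f_zz f_w² − f_z² f_ww`, the bordered-Hessian
determinant of `f` with last diagonal entry `0`. -/
noncomputable def Delta (f : ℂ × ℂ → ℂ) (q : ℂ × ℂ) : ℂ :=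
  2 * pz f q * pw f q * pw (pz f) q
    - pz (pz f) q * (pw f q) ^ 2 - (pz f q) ^ 2 * pw (pw f) q

open Filter Topology Metric Asymptotics

theorem continuousAt_deriv_slice {E : Type*} [NormedAddCommGroup E] [NormedSpace ℂ E]
    [CompleteSpace E] {μ : ℂ × ℂ → E} {p : ℂ × ℂ}
    (hμ : ∀ᶠ q in 𝓝 p, DifferentiableAt ℂ μ q) :
    ContinuousAt (fun q : ℂ × ℂ => deriv (fun ζ => μ (ζ, q.2)) q.1) p := by
  obtain ⟨ε, hε, hball⟩ := eventually_nhds_iff_ball.1 hμ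
  set F : ℂ → ℂ → E := fun w ζ => μ (ζ, w)
  have hr : 0 < ε / 2 := half_pos hε
  have hslice : ∀ w ∈ ball p.2 ε, DifferentiableOn ℂ (F w) (ball p.1 ε) := fun w hw ζ hζ =>
    ((hball (ζ, w) (by rw [← ball_prod_same]; exact ⟨hζ, hw⟩)).comp ζ
      (differentiableAt_id.prodMk (differentiableAt_const w))).differentiableWithinAt
  have hunif : UniformContinuousOn ↿F (closedBall p.2 (ε / 2) ×ˢ closedBall p.1 (ε / 2)) := by
    refine ((isCompact_closedBall _ _).prod
      (isCompact_closedBall _ _)).uniformContinuousOn_of_continuous fun x hx =>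
      ((hball x.swap ?_).continuousAt.comp continuous_swap.continuousAt).continuousWithinAt
    rw [← ball_prod_same]
    exact ⟨closedBall_subset_ball (half_lt_self hε) hx.2,
      closedBall_subset_ball (half_lt_self hε) hx.1⟩
  have hlim : TendstoLocallyUniformlyOn F (F p.2) (𝓝 p.2) (ball p.1 (ε / 2)) := by
    have := hunif.tendstoUniformlyOn (mem_closedBall_self hr.le)
    rw [nhdsWithin_eq_nhds.2 (closedBall_mem_nhds _ hr)] at this
    exact (this.mono ball_subset_closedBall).tendstoLocallyUniformlyOn
  have hderiv := hlim.deriv (eventually_of_mem (ball_mem_nhds _ hε) fun w hw =>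
    (hslice w hw).mono (ball_subset_ball (half_le_self hε.le))) isOpen_ball
  have hcont : ContinuousAt (deriv (F p.2)) p.1 :=
    (((hslice p.2 (mem_ball_self hε)).analyticAt (ball_mem_nhds _ hε)).deriv).continuousAt
  refine tendsto_comp_of_locally_uniform_limit hcont (continuous_fst.tendsto p) fun u hu => ?_
  obtain ⟨t, ht, hev⟩ := hderiv u hu p.1 (mem_ball_self hr)
  rw [nhdsWithin_eq_nhds.2 (ball_mem_nhds _ hr)] at ht
  exact ⟨t, ht, (continuous_snd.tendsto p).eventually hev⟩

theorem pz_eq_deriv_slice {μ : ℂ × ℂ → ℂ} {q : ℂ × ℂ} (hμ : DifferentiableAt ℂ μ q) :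
    pz μ q = deriv (fun ζ => μ (ζ, q.2)) q.1 :=
  (hμ.hasFDerivAt.comp_hasDerivAt q.1
    ((hasDerivAt_id q.1).prodMk (hasDerivAt_const q.1 q.2))).deriv.symm

theorem pw_eq_pz_comp_swap {μ : ℂ × ℂ → ℂ} {q : ℂ × ℂ} (hμ : DifferentiableAt ℂ μ q) :
    pw μ q = pz (μ ∘ Prod.swap) q.swap := by
  have hswap : HasFDerivAt (Prod.swap : ℂ × ℂ → ℂ × ℂ)
      ((ContinuousLinearMap.snd ℂ ℂ ℂ).prod (ContinuousLinearMap.fst ℂ ℂ ℂ)) q.swap :=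
    hasFDerivAt_snd.prodMk hasFDerivAt_fst
  rw [pz, ((hμ.hasFDerivAt : HasFDerivAt μ _ q.swap.swap).comp q.swap hswap).fderiv]
  rfl

theorem continuousAt_pz {μ : ℂ × ℂ → ℂ} {p : ℂ × ℂ}
    (hμ : ∀ᶠ q in 𝓝 p, DifferentiableAt ℂ μ q) : ContinuousAt (pz μ) p :=
  (continuousAt_deriv_slice hμ).congr (hμ.mono fun _ hq => (pz_eq_deriv_slice hq).symm)

theorem continuousAt_pw {μ : ℂ × ℂ → ℂ} {p : ℂ × ℂ}
    (hμ : ∀ᶠ q in 𝓝 p, DifferentiableAt ℂ μ q) : ContinuousAt (pw μ) p := by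
  have hswap : ∀ᶠ q in 𝓝 p.swap, DifferentiableAt ℂ (μ ∘ Prod.swap) q :=
    ((continuous_swap.tendsto p.swap).eventually hμ).mono fun q hq =>
      hq.comp q (differentiableAt_snd.prodMk differentiableAt_fst)
  refine ((continuousAt_pz hswap).comp continuous_swap.continuousAt).congr ?_
  exact hμ.mono fun q hq => (pw_eq_pz_comp_swap hq).symm

theorem HasFDerivAt.mul_of_eq_zero_of_continuousAt {𝕜 E : Type*} [NontriviallyNormedField 𝕜]
    [NormedAddCommGroup E] [NormedSpace 𝕜 E] {φ M : E → 𝕜} {Dφ : E →L[𝕜] 𝕜} {p : E}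
    (hφ : HasFDerivAt φ Dφ p) (hφp : φ p = 0) (hM : ContinuousAt M p) :
    HasFDerivAt (fun q => φ q * M q) (M p • Dφ) p := by
  have hsmall : HasFDerivAt (fun q => φ q * (M q - M p)) (0 : E →L[𝕜] 𝕜) p := by
    have hφO : φ =O[𝓝 p] fun q => ‖q - p‖ := by
      simpa [hφp] using hφ.isBigO_sub.norm_right
    have hMo : (fun q => M q - M p) =o[𝓝 p] fun _ => (1 : ℝ) :=
      isLittleO_one_iff ℝ |>.2 (by simpa using hM.tendsto.sub_const (M p))
    rw [hasFDerivAt_iff_isLittleO]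
    simpa [hφp] using (hφO.mul_isLittleO hMo |>.congr_right fun _ => mul_one _).of_norm_right
  have hsum := hsmall.add (hφ.const_mul (M p))
  rw [zero_add] at hsum
  exact hsum.congr_of_eventuallyEq (.of_forall fun q => by simp only [Pi.add_apply]; ring)

theorem fderiv_apply_of_eventuallyEq_const_add_mul {𝕜 E : Type*} [NontriviallyNormedField 𝕜]
    [NormedAddCommGroup E] [NormedSpace 𝕜 E] {c : 𝕜} {f μ φ : E → 𝕜} {q : E}
    (hf : f =ᶠ[𝓝 q] fun x => c + μ x * φ x) (hμ : DifferentiableAt 𝕜 μ q)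
    (hφ : DifferentiableAt 𝕜 φ q) (v : E) :
    fderiv 𝕜 f q v = μ q * fderiv 𝕜 φ q v + φ q * fderiv 𝕜 μ q v := by
  have hD : HasFDerivAt (fun x => c + μ x * φ x) (μ q • fderiv 𝕜 φ q + φ q • fderiv 𝕜 μ q) q :=
    (hμ.hasFDerivAt.mul hφ.hasFDerivAt).const_add c
  rw [hf.fderiv_eq, hD.fderiv]
  rfl

def graphDefect (p : ℂ × ℂ) (g : ℂ → ℂ) (q : ℂ × ℂ) : ℂ := (q.2 - p.2) - g (q.1 - p.1)

section GraphDefect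

open ContinuousLinearMap

variable {p : ℂ × ℂ} {g : ℂ → ℂ}

theorem graphDefect_self (hg0 : g 0 = 0) : graphDefect p g p = 0 := by
  simp [graphDefect, hg0]

theorem hasFDerivAt_graphDefect {q : ℂ × ℂ} (hg : DifferentiableAt ℂ g (q.1 - p.1)) :
    HasFDerivAt (graphDefect p g) (snd ℂ ℂ ℂ - deriv g (q.1 - p.1) • fst ℂ ℂ ℂ) q :=
  (hasFDerivAt_snd.sub_const p.2).sub
    (hg.hasDerivAt.comp_hasFDerivAt q (hasFDerivAt_fst.sub_const p.1))

theorem tendsto_fst_sub_fst : Tendsto (fun q : ℂ × ℂ => q.1 - p.1) (𝓝 p) (𝓝 0) :=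
  (continuous_fst.sub continuous_const).tendsto' p 0 (sub_self p.1)

variable {c : ℂ} {f μ : ℂ × ℂ → ℂ}

theorem pz_eventuallyEq_of_mul_graphDefect (hμ : ∀ᶠ q in 𝓝 p, DifferentiableAt ℂ μ q)
    (hg : AnalyticAt ℂ g 0) (hf : ∀ᶠ q in 𝓝 p, f q = c + μ q * graphDefect p g q) :
    pz f =ᶠ[𝓝 p] fun q => μ q * -deriv g (q.1 - p.1) + graphDefect p g q * pz μ q := by
  filter_upwards [hf.eventually_nhds, hμ,
    tendsto_fst_sub_fst.eventually hg.eventually_analyticAt] with q hfq hμq hgq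
  have hφ := hasFDerivAt_graphDefect hgq.differentiableAt
  rw [pz, fderiv_apply_of_eventuallyEq_const_add_mul hfq hμq hφ.differentiableAt, hφ.fderiv]
  simp [pz]

theorem pw_eventuallyEq_of_mul_graphDefect (hμ : ∀ᶠ q in 𝓝 p, DifferentiableAt ℂ μ q)
    (hg : AnalyticAt ℂ g 0) (hf : ∀ᶠ q in 𝓝 p, f q = c + μ q * graphDefect p g q) :
    pw f =ᶠ[𝓝 p] fun q => μ q + graphDefect p g q * pw μ q := by
  filter_upwards [hf.eventually_nhds, hμ,
    tendsto_fst_sub_fst.eventually hg.eventually_analyticAt] with q hfq hμq hgq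
  have hφ := hasFDerivAt_graphDefect hgq.differentiableAt
  rw [pw, fderiv_apply_of_eventuallyEq_const_add_mul hfq hμq hφ.differentiableAt, hφ.fderiv]
  simp [pw]

theorem pz_eq_of_mul_graphDefect (hμ : ∀ᶠ q in 𝓝 p, DifferentiableAt ℂ μ q)
    (hg : AnalyticAt ℂ g 0) (hf : ∀ᶠ q in 𝓝 p, f q = c + μ q * graphDefect p g q)
    (hg0 : g 0 = 0) : pz f p = -(μ p) * deriv g 0 := by
  simp [(pz_eventuallyEq_of_mul_graphDefect hμ hg hf).self_of_nhds, graphDefect_self hg0]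

theorem pw_eq_of_mul_graphDefect (hμ : ∀ᶠ q in 𝓝 p, DifferentiableAt ℂ μ q)
    (hg : AnalyticAt ℂ g 0) (hf : ∀ᶠ q in 𝓝 p, f q = c + μ q * graphDefect p g q)
    (hg0 : g 0 = 0) : pw f p = μ p := by
  simp [(pw_eventuallyEq_of_mul_graphDefect hμ hg hf).self_of_nhds, graphDefect_self hg0]

theorem hasFDerivAt_pz_of_mul_graphDefect (hμ : ∀ᶠ q in 𝓝 p, DifferentiableAt ℂ μ q)
    (hg : AnalyticAt ℂ g 0) (hf : ∀ᶠ q in 𝓝 p, f q = c + μ q * graphDefect p g q)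
    (hg0 : g 0 = 0) :
    HasFDerivAt (pz f) (μ p • -(deriv (deriv g) 0 • fst ℂ ℂ ℂ) + -deriv g 0 • fderiv ℂ μ p
      + pz μ p • (snd ℂ ℂ ℂ - deriv g 0 • fst ℂ ℂ ℂ)) p := by
  have hg' : HasFDerivAt (fun q : ℂ × ℂ => -deriv g (q.1 - p.1))
      (-(deriv (deriv g) 0 • fst ℂ ℂ ℂ)) p :=
    (hg.deriv.differentiableAt.hasDerivAt.comp_hasFDerivAt_of_eq p
      (hasFDerivAt_fst.sub_const p.1) (sub_self p.1).symm).neg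
  have hφ := hasFDerivAt_graphDefect (p := p) (q := p) (sub_self p.1 ▸ hg.differentiableAt)
  have hφμ := hφ.mul_of_eq_zero_of_continuousAt (graphDefect_self hg0) (continuousAt_pz hμ)
  refine (((hμ.self_of_nhds.hasFDerivAt.mul hg').add hφμ).congr_of_eventuallyEq
    (pz_eventuallyEq_of_mul_graphDefect hμ hg hf)).congr_fderiv ?_
  simp

theorem hasFDerivAt_pw_of_mul_graphDefect (hμ : ∀ᶠ q in 𝓝 p, DifferentiableAt ℂ μ q)
    (hg : AnalyticAt ℂ g 0) (hf : ∀ᶠ q in 𝓝 p, f q = c + μ q * graphDefect p g q)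
    (hg0 : g 0 = 0) :
    HasFDerivAt (pw f) (fderiv ℂ μ p + pw μ p • (snd ℂ ℂ ℂ - deriv g 0 • fst ℂ ℂ ℂ)) p := by
  have hφ := hasFDerivAt_graphDefect (p := p) (q := p) (sub_self p.1 ▸ hg.differentiableAt)
  have hφμ := hφ.mul_of_eq_zero_of_continuousAt (graphDefect_self hg0) (continuousAt_pw hμ)
  refine ((hμ.self_of_nhds.hasFDerivAt.add hφμ).congr_of_eventuallyEq
    (pw_eventuallyEq_of_mul_graphDefect hμ hg hf)).congr_fderiv ?_
  simp

theorem pz_pz_eq_of_mul_graphDefect (hμ : ∀ᶠ q in 𝓝 p, DifferentiableAt ℂ μ q)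
    (hg : AnalyticAt ℂ g 0) (hf : ∀ᶠ q in 𝓝 p, f q = c + μ q * graphDefect p g q)
    (hg0 : g 0 = 0) :
    pz (pz f) p = -(2 * deriv g 0 * pz μ p + μ p * deriv (deriv g) 0) := by
  simp only [pz, (hasFDerivAt_pz_of_mul_graphDefect hμ hg hf hg0).fderiv, add_apply,
    neg_apply, sub_apply, smul_apply, coe_fst', coe_snd', smul_eq_mul]
  ring

theorem pw_pz_eq_of_mul_graphDefect (hμ : ∀ᶠ q in 𝓝 p, DifferentiableAt ℂ μ q)
    (hg : AnalyticAt ℂ g 0) (hf : ∀ᶠ q in 𝓝 p, f q = c + μ q * graphDefect p g q)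
    (hg0 : g 0 = 0) : pw (pz f) p = pz μ p - deriv g 0 * pw μ p := by
  simp only [pz, pw, (hasFDerivAt_pz_of_mul_graphDefect hμ hg hf hg0).fderiv, add_apply,
    neg_apply, sub_apply, smul_apply, coe_fst', coe_snd', smul_eq_mul]
  ring

theorem pw_pw_eq_of_mul_graphDefect (hμ : ∀ᶠ q in 𝓝 p, DifferentiableAt ℂ μ q)
    (hg : AnalyticAt ℂ g 0) (hf : ∀ᶠ q in 𝓝 p, f q = c + μ q * graphDefect p g q)
    (hg0 : g 0 = 0) : pw (pw f) p = 2 * pw μ p := by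
  simp only [pw, (hasFDerivAt_pw_of_mul_graphDefect hμ hg hf hg0).fderiv, add_apply,
    sub_apply, smul_apply, coe_fst', coe_snd', smul_eq_mul]
  ring

end GraphDefect

theorem stmt2_general (p : ℂ × ℂ) (c : ℂ) (f μ : ℂ × ℂ → ℂ) (g : ℂ → ℂ)
    (V : Set (ℂ × ℂ)) (hV : IsOpen V) (hpV : p ∈ V)
    (hμ : DifferentiableOn ℂ μ V)
    (W : Set ℂ) (hW : IsOpen W) (h0W : (0 : ℂ) ∈ W)
    (hg : DifferentiableOn ℂ g W) (hg0 : g 0 = 0)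
    (heq : ∀ q ∈ V, f q - c = μ q * ((q.2 - p.2) - g (q.1 - p.1))) :
    pz f p = -(μ p) * deriv g 0 ∧
    pw f p = μ p ∧
    Delta f p = (μ p) ^ 3 * deriv (deriv g) 0 := by
  have hμ' : ∀ᶠ q in 𝓝 p, DifferentiableAt ℂ μ q :=
    eventually_of_mem (hV.mem_nhds hpV) fun q hq => hμ.differentiableAt (hV.mem_nhds hq)
  have hg' : AnalyticAt ℂ g 0 := hg.analyticAt (hW.mem_nhds h0W)
  have hf : ∀ᶠ q in 𝓝 p, f q = c + μ q * graphDefect p g q :=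
    eventually_of_mem (hV.mem_nhds hpV) fun q hq => eq_add_of_sub_eq' (heq q hq)
  have hz := pz_eq_of_mul_graphDefect hμ' hg' hf hg0
  have hw := pw_eq_of_mul_graphDefect hμ' hg' hf hg0
  refine ⟨hz, hw, ?_⟩
  rw [Delta, hz, hw, pz_pz_eq_of_mul_graphDefect hμ' hg' hf hg0,
    pw_pz_eq_of_mul_graphDefect hμ' hg' hf hg0, pw_pw_eq_of_mul_graphDefect hμ' hg' hf hg0]
  ring

/-- if `f(z,w) − c = μ(z,w)·[(w − w₀) − g(z − z₀)]` near
`p = (z₀,w₀)`, with `f, μ` holomorphic near `p`, `g` holomorphic near `0`,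
`g(0) = 0`, `μ(p) ≠ 0`, then `f_z(p) = −μ(p) g'(0)`, `f_w(p) = μ(p)` and
`Δ_f(p) = μ(p)³ g''(0)`. -/
theorem stmt2 (p : ℂ × ℂ) (c : ℂ) (f μ : ℂ × ℂ → ℂ) (g : ℂ → ℂ)
    (V : Set (ℂ × ℂ)) (hV : IsOpen V) (hpV : p ∈ V)
    (hf : DifferentiableOn ℂ f V) (hμ : DifferentiableOn ℂ μ V)
    (W : Set ℂ) (hW : IsOpen W) (h0W : (0 : ℂ) ∈ W)
    (hg : DifferentiableOn ℂ g W) (hg0 : g 0 = 0)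
    (hVW : ∀ q ∈ V, q.1 - p.1 ∈ W)
    (heq : ∀ q ∈ V, f q - c = μ q * ((q.2 - p.2) - g (q.1 - p.1)))
    (hμp : μ p ≠ 0) :
    pz f p = -(μ p) * deriv g 0 ∧
    pw f p = μ p ∧
    Delta f p = (μ p) ^ 3 * deriv (deriv g) 0 :=
  stmt2_general p c f μ g V hV hpV hμ W hW h0W hg hg0 heq
end

section
/- Let p = (z₀, w₀) ∈ ℂ² and c ∈ ℂ. Suppose f is holomorphic on a neighborhood of p in ℂ², μ is holomorphic on a neighborhood of p, g is holomorphic on a neighborhood of 0 ∈ ℂ with g(0) = 0, and f(z,w) − c = μ(z,w)·[(w − w₀) − g(z − z₀)] holds on a neighborhood of p, with μ(p) ≠ 0. Then 2·|Δ_f(p)|² / (|f_z(p)|² + |f_w(p)|²)³ = 2·|g''(0)|² / (1 + |g'(0)|²)³. (Thus the curvature expression K = 2|Δ_f|²/(|f_z|²+|f_w|²)³ of the level curve f = c at a regular point agrees with the curvature of its local graph representation w = w₀ + g(z − z₀).) -/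
/-!
Near `p` write `f = c + μ h` with `h(z, w) = w - w₀ - g(z - z₀)`. Since `h(p) = 0`, the product
rule gives `f_z = μ h_z`, `f_w = μ h_w` at `p`, and in the second derivatives of `f` at `p` the terms
carrying first derivatives of `μ` cancel in `Δ`, so that `Δ_f(p) = μ(p)³ Δ_h(p)`; `μ` only needs
continuous first partials for this, which follows from Weierstrass' theorem on locally uniform
limits of holomorphic functions applied along one variable with the other as a parameter. For the
graph, `h_z = -g'(z - z₀)` and `h_w = 1`, so `Δ_h(p) = g''(0)`, and the powers of `|μ(p)|` cancel
in the quotient.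
-/

open Metric Filter Topology

theorem continuousAt_deriv_of_continuousOn_of_differentiableOn
    {X E : Type*} [PseudoMetricSpace X] [ProperSpace X] [NormedAddCommGroup E] [NormedSpace ℂ E]
    [CompleteSpace E]
    {F : X → ℂ → E} {x₀ : X} {z₀ : ℂ} {r : ℝ} (hr : 0 < r)
    (hF : ContinuousOn ↿F (closedBall x₀ r ×ˢ closedBall z₀ r))
    (hFd : ∀ x ∈ closedBall x₀ r, DifferentiableOn ℂ (F x) (ball z₀ r)) :
    ContinuousAt (fun q : X × ℂ => deriv (F q.1) q.2) (x₀, z₀) := by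
  have hunif : TendstoUniformlyOn F (F x₀) (𝓝 x₀) (closedBall z₀ r) := by
    have := (((isCompact_closedBall x₀ r).prod (isCompact_closedBall z₀ r)
      ).uniformContinuousOn_of_continuous hF).tendstoUniformlyOn (mem_closedBall_self hr.le)
    rwa [nhdsWithin_eq_nhds.2 (closedBall_mem_nhds x₀ hr)] at this
  have hderiv : TendstoLocallyUniformlyOn (deriv ∘ F) (deriv (F x₀)) (𝓝 x₀) (ball z₀ r) :=
    (hunif.tendstoLocallyUniformlyOn.mono ball_subset_closedBall).deriv
      (eventually_of_mem (closedBall_mem_nhds x₀ hr) hFd) isOpen_ball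
  have hz₀ : z₀ ∈ ball z₀ r := mem_ball_self hr
  have hcont : ContinuousWithinAt (deriv (F x₀)) (ball z₀ r) z₀ :=
    ((hFd x₀ (mem_closedBall_self hr.le)).deriv isOpen_ball).continuousOn z₀ hz₀
  refine tendsto_comp_of_locally_uniform_limit_within hcont ?_ fun u hu => ?_
  · rw [nhdsWithin_eq_nhds.2 (isOpen_ball.mem_nhds hz₀)]
    exact continuous_snd.tendsto _
  · obtain ⟨t, ht, hev⟩ := hderiv u hu z₀ hz₀
    exact ⟨t, ht, (continuous_fst.tendsto (x₀, z₀)).eventually hev⟩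

theorem hasFDerivAt_mul_of_eq_zero {𝕜 E : Type*} [NontriviallyNormedField 𝕜]
    [NormedAddCommGroup E] [NormedSpace 𝕜 E] {A h : E → 𝕜} {x : E}
    (hA : ContinuousAt A x) (hh : DifferentiableAt 𝕜 h x) (h0 : h x = 0) :
    HasFDerivAt (fun y => A y * h y) (A x • fderiv 𝕜 h x) x := by
  have hA' : (fun y => A y - A x) =o[𝓝 x] fun _ => (1 : ℝ) :=
    (Asymptotics.isLittleO_one_iff ℝ).2 (by simpa using hA.sub_const (A x))
  have hh' : h =O[𝓝 x] fun y => y - x := by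
    simpa [h0] using hh.hasFDerivAt.isBigO_sub
  have hrem : HasFDerivAt (fun y => (A y - A x) * h y) (0 : E →L[𝕜] 𝕜) x := by
    refine hasFDerivAt_iff_isLittleO.2 ?_
    have := hA'.mul_isBigO hh'.norm_right
    simp only [one_mul] at this
    simpa [h0] using this.of_norm_right
  have := (hh.hasFDerivAt.const_mul (A x)).add hrem
  rw [add_zero] at this
  exact this.congr_of_eventuallyEq <| .of_forall fun y => by simp only [Pi.add_apply]; ring

section Partials

variable {f μ h : ℂ × ℂ → ℂ} {q : ℂ × ℂ}

theorem HasFDerivAt.pz_eq {L : ℂ × ℂ →L[ℂ] ℂ} (hL : HasFDerivAt f L q) :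
    pz f q = L (1, 0) := by
  rw [pz, hL.fderiv]

theorem HasFDerivAt.pw_eq {L : ℂ × ℂ →L[ℂ] ℂ} (hL : HasFDerivAt f L q) :
    pw f q = L (0, 1) := by
  rw [pw, hL.fderiv]

theorem pz_eq_deriv (hf : DifferentiableAt ℂ f q) : pz f q = deriv (fun z => f (z, q.2)) q.1 :=
  (hf.hasFDerivAt.comp_hasDerivAt q.1
    ((hasDerivAt_id q.1).prodMk (hasDerivAt_const q.1 q.2))).deriv.symm

theorem pw_eq_deriv (hf : DifferentiableAt ℂ f q) : pw f q = deriv (fun w => f (q.1, w)) q.2 :=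
  (hf.hasFDerivAt.comp_hasDerivAt q.2
    ((hasDerivAt_const q.2 q.1).prodMk (hasDerivAt_id q.2))).deriv.symm

protected theorem Filter.EventuallyEq.pz {f' : ℂ × ℂ → ℂ} (hf : f =ᶠ[𝓝 q] f') :
    pz f =ᶠ[𝓝 q] pz f' :=
  hf.fderiv.mono fun y hy => by rw [_root_.pz, _root_.pz, hy]

protected theorem Filter.EventuallyEq.pw {f' : ℂ × ℂ → ℂ} (hf : f =ᶠ[𝓝 q] f') :
    pw f =ᶠ[𝓝 q] pw f' :=
  hf.fderiv.mono fun y hy => by rw [_root_.pw, _root_.pw, hy]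

theorem Filter.EventuallyEq.Delta_eq {f' : ℂ × ℂ → ℂ} (hf : f =ᶠ[𝓝 q] f') :
    Delta f q = Delta f' q := by
  simp only [Delta, hf.pz.eq_of_nhds, hf.pw.eq_of_nhds, hf.pz.pz.eq_of_nhds, hf.pz.pw.eq_of_nhds,
    hf.pw.pw.eq_of_nhds]

theorem pz_const_add (c : ℂ) : pz (fun y => c + f y) = pz f := by
  ext y; simp only [pz, fderiv_const_add]

theorem pw_const_add (c : ℂ) : pw (fun y => c + f y) = pw f := by
  ext y; simp only [pw, fderiv_const_add]

theorem Delta_const_add (c : ℂ) : Delta (fun y => c + f y) = Delta f := by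
  ext y; simp only [Delta, pz_const_add, pw_const_add]

theorem pz_mul (hμ : DifferentiableAt ℂ μ q) (hh : DifferentiableAt ℂ h q) :
    pz (fun y => μ y * h y) q = pz μ q * h q + μ q * pz h q := by
  rw [HasFDerivAt.pz_eq (f := fun y => μ y * h y) (hμ.hasFDerivAt.mul hh.hasFDerivAt)]
  simp [pz]; ring

theorem pw_mul (hμ : DifferentiableAt ℂ μ q) (hh : DifferentiableAt ℂ h q) :
    pw (fun y => μ y * h y) q = pw μ q * h q + μ q * pw h q := by
  rw [HasFDerivAt.pw_eq (f := fun y => μ y * h y) (hμ.hasFDerivAt.mul hh.hasFDerivAt)]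
  simp [pw]; ring

theorem pz_mul_of_eq_zero (hμ : DifferentiableAt ℂ μ q) (hh : DifferentiableAt ℂ h q)
    (h0 : h q = 0) : pz (fun y => μ y * h y) q = μ q * pz h q := by
  rw [pz_mul hμ hh, h0, mul_zero, zero_add]

theorem pw_mul_of_eq_zero (hμ : DifferentiableAt ℂ μ q) (hh : DifferentiableAt ℂ h q)
    (h0 : h q = 0) : pw (fun y => μ y * h y) q = μ q * pw h q := by
  rw [pw_mul hμ hh, h0, mul_zero, zero_add]

theorem continuousAt_pz_s3 {V : Set (ℂ × ℂ)} (hV : IsOpen V) (hf : DifferentiableOn ℂ f V)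
    (hq : q ∈ V) : ContinuousAt (pz f) q := by
  obtain ⟨r, hr, hrV⟩ := nhds_basis_closedBall.mem_iff.1 (hV.mem_nhds hq)
  rw [← closedBall_prod_same] at hrV
  have hslice : ContinuousAt (fun x : ℂ × ℂ => deriv (fun z => f (z, x.1)) x.2) (q.2, q.1) :=
    continuousAt_deriv_of_continuousOn_of_differentiableOn (F := fun w z => f (z, w)) hr
      (hf.continuousOn.comp continuous_swap.continuousOn fun x hx => hrV ⟨hx.2, hx.1⟩)
      fun w hw => hf.comp (by fun_prop) fun z hz => hrV ⟨ball_subset_closedBall hz, hw⟩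
  refine (hslice.comp (x := q) continuous_swap.continuousAt).congr ?_
  filter_upwards [hV.mem_nhds hq] with y hy
  exact (pz_eq_deriv (hf.differentiableAt (hV.mem_nhds hy))).symm

theorem continuousAt_pw_s3 {V : Set (ℂ × ℂ)} (hV : IsOpen V) (hf : DifferentiableOn ℂ f V)
    (hq : q ∈ V) : ContinuousAt (pw f) q := by
  obtain ⟨r, hr, hrV⟩ := nhds_basis_closedBall.mem_iff.1 (hV.mem_nhds hq)
  rw [← closedBall_prod_same] at hrV
  have hslice : ContinuousAt (fun x : ℂ × ℂ => deriv (fun w => f (x.1, w)) x.2) (q.1, q.2) :=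
    continuousAt_deriv_of_continuousOn_of_differentiableOn (F := fun z w => f (z, w)) hr
      (hf.continuousOn.mono hrV)
      fun z hz => hf.comp (by fun_prop) fun w hw => hrV ⟨hz, ball_subset_closedBall hw⟩
  refine hslice.congr ?_
  filter_upwards [hV.mem_nhds hq] with y hy
  exact (pw_eq_deriv (hf.differentiableAt (hV.mem_nhds hy))).symm

theorem Delta_mul_of_eq_zero
    (hμ : ∀ᶠ y in 𝓝 q, DifferentiableAt ℂ μ y) (hμz : ContinuousAt (pz μ) q)
    (hμw : ContinuousAt (pw μ) q) (hh : ∀ᶠ y in 𝓝 q, DifferentiableAt ℂ h y)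
    (hhz : DifferentiableAt ℂ (pz h) q) (hhw : DifferentiableAt ℂ (pw h) q) (h0 : h q = 0) :
    Delta (fun y => μ y * h y) q = μ q ^ 3 * Delta h q := by
  have hμq := hμ.self_of_nhds
  have hhq := hh.self_of_nhds
  have hz : HasFDerivAt (pz fun y => μ y * h y)
      (pz μ q • fderiv ℂ h q + (μ q • fderiv ℂ (pz h) q + pz h q • fderiv ℂ μ q)) q := by
    refine ((hasFDerivAt_mul_of_eq_zero hμz hhq h0).add
      (hμq.hasFDerivAt.mul hhz.hasFDerivAt)).congr_of_eventuallyEq ?_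
    filter_upwards [hμ, hh] with y hμy hhy
    rw [pz_mul hμy hhy, Pi.add_apply, Pi.mul_apply, mul_comm]
  have hw : HasFDerivAt (pw fun y => μ y * h y)
      (pw μ q • fderiv ℂ h q + (μ q • fderiv ℂ (pw h) q + pw h q • fderiv ℂ μ q)) q := by
    refine ((hasFDerivAt_mul_of_eq_zero hμw hhq h0).add
      (hμq.hasFDerivAt.mul hhw.hasFDerivAt)).congr_of_eventuallyEq ?_
    filter_upwards [hμ, hh] with y hμy hhy
    rw [pw_mul hμy hhy, Pi.add_apply, Pi.mul_apply, mul_comm]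
  rw [Delta, Delta, hz.pz_eq, hz.pw_eq, hw.pw_eq, pz_mul hμq hhq, pw_mul hμq hhq, h0]
  simp only [pz, pw, add_apply, smul_apply, smul_eq_mul]
  ring

end Partials

def graphDefiningFun (g : ℂ → ℂ) (p q : ℂ × ℂ) : ℂ := q.2 - p.2 - g (q.1 - p.1)

section Graph

variable {g : ℂ → ℂ} {p q : ℂ × ℂ}

theorem graphDefiningFun_self (hg0 : g 0 = 0) : graphDefiningFun g p p = 0 := by
  simp [graphDefiningFun, hg0]

theorem eventually_differentiableAt_sub_fst (hg : ∀ᶠ z in 𝓝 0, DifferentiableAt ℂ g z) :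
    ∀ᶠ q in 𝓝 p, DifferentiableAt ℂ g (q.1 - p.1) := by
  have : Tendsto (fun q : ℂ × ℂ => q.1 - p.1) (𝓝 p) (𝓝 0) := by
    simpa using (continuous_fst.sub continuous_const).tendsto (f := fun q : ℂ × ℂ => q.1 - p.1) p
  exact this.eventually hg

theorem hasFDerivAt_graphDefiningFun (hg : DifferentiableAt ℂ g (q.1 - p.1)) :
    HasFDerivAt (graphDefiningFun g p)
      (ContinuousLinearMap.snd ℂ ℂ ℂ - deriv g (q.1 - p.1) • ContinuousLinearMap.fst ℂ ℂ ℂ) q :=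
  (hasFDerivAt_snd.sub_const p.2).sub
    (hg.hasDerivAt.comp_hasFDerivAt q (hasFDerivAt_fst.sub_const p.1))

theorem eventually_differentiableAt_graphDefiningFun (hg : ∀ᶠ z in 𝓝 0, DifferentiableAt ℂ g z) :
    ∀ᶠ q in 𝓝 p, DifferentiableAt ℂ (graphDefiningFun g p) q :=
  (eventually_differentiableAt_sub_fst hg).mono fun _ hq =>
    (hasFDerivAt_graphDefiningFun hq).differentiableAt

theorem pz_graphDefiningFun (hg : DifferentiableAt ℂ g (q.1 - p.1)) :
    pz (graphDefiningFun g p) q = -deriv g (q.1 - p.1) := by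
  simp [(hasFDerivAt_graphDefiningFun hg).pz_eq]

theorem pw_graphDefiningFun (hg : DifferentiableAt ℂ g (q.1 - p.1)) :
    pw (graphDefiningFun g p) q = 1 := by
  simp [(hasFDerivAt_graphDefiningFun hg).pw_eq]

theorem pz_graphDefiningFun_self (hg : DifferentiableAt ℂ g 0) :
    pz (graphDefiningFun g p) p = -deriv g 0 := by
  simpa using pz_graphDefiningFun (p := p) (q := p) (by simpa using hg)

theorem pw_graphDefiningFun_self (hg : DifferentiableAt ℂ g 0) :
    pw (graphDefiningFun g p) p = 1 :=
  pw_graphDefiningFun (by simpa using hg)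

theorem hasFDerivAt_pz_graphDefiningFun (hg : ∀ᶠ z in 𝓝 0, DifferentiableAt ℂ g z)
    (hg' : DifferentiableAt ℂ (deriv g) 0) :
    HasFDerivAt (pz (graphDefiningFun g p))
      (-(deriv (deriv g) 0 • ContinuousLinearMap.fst ℂ ℂ ℂ)) p := by
  refine (hg'.hasDerivAt.comp_hasFDerivAt_of_eq p (hasFDerivAt_fst.sub_const p.1)
    (sub_self p.1).symm).neg.congr_of_eventuallyEq ?_
  filter_upwards [eventually_differentiableAt_sub_fst hg] with q hq
  exact pz_graphDefiningFun hq

theorem hasFDerivAt_pw_graphDefiningFun (hg : ∀ᶠ z in 𝓝 0, DifferentiableAt ℂ g z) :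
    HasFDerivAt (pw (graphDefiningFun g p)) (0 : ℂ × ℂ →L[ℂ] ℂ) p := by
  refine (hasFDerivAt_const (1 : ℂ) p).congr_of_eventuallyEq ?_
  filter_upwards [eventually_differentiableAt_sub_fst hg] with q hq
  exact pw_graphDefiningFun hq

theorem Delta_graphDefiningFun (hg : ∀ᶠ z in 𝓝 0, DifferentiableAt ℂ g z)
    (hg' : DifferentiableAt ℂ (deriv g) 0) :
    Delta (graphDefiningFun g p) p = deriv (deriv g) 0 := by
  rw [Delta, (hasFDerivAt_pz_graphDefiningFun hg hg').pz_eq,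
    (hasFDerivAt_pz_graphDefiningFun hg hg').pw_eq, (hasFDerivAt_pw_graphDefiningFun hg).pw_eq,
    pz_graphDefiningFun_self hg.self_of_nhds, pw_graphDefiningFun_self hg.self_of_nhds]
  simp

end Graph

theorem curvature_quotient_mul {m : ℂ} (hm : m ≠ 0) (d u v : ℂ) :
    2 * ‖m ^ 3 * d‖ ^ 2 / (‖m * u‖ ^ 2 + ‖m * v‖ ^ 2) ^ 3
      = 2 * ‖d‖ ^ 2 / (‖u‖ ^ 2 + ‖v‖ ^ 2) ^ 3 := by
  have hm6 : ‖m‖ ^ 6 ≠ 0 := pow_ne_zero 6 (norm_ne_zero_iff.2 hm)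
  calc 2 * ‖m ^ 3 * d‖ ^ 2 / (‖m * u‖ ^ 2 + ‖m * v‖ ^ 2) ^ 3
      = ‖m‖ ^ 6 * (2 * ‖d‖ ^ 2) / (‖m‖ ^ 6 * (‖u‖ ^ 2 + ‖v‖ ^ 2) ^ 3) := by
        simp only [norm_mul, norm_pow]; ring
    _ = 2 * ‖d‖ ^ 2 / (‖u‖ ^ 2 + ‖v‖ ^ 2) ^ 3 := mul_div_mul_left _ _ hm6

theorem stmt3_general (p : ℂ × ℂ) (c : ℂ) (f μ : ℂ × ℂ → ℂ) (g : ℂ → ℂ)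
    (V : Set (ℂ × ℂ)) (hV : IsOpen V) (hpV : p ∈ V)
    (hμ : DifferentiableOn ℂ μ V)
    (W : Set ℂ) (hW : IsOpen W) (h0W : (0 : ℂ) ∈ W)
    (hg : DifferentiableOn ℂ g W) (hg0 : g 0 = 0)
    (heq : ∀ q ∈ V, f q - c = μ q * ((q.2 - p.2) - g (q.1 - p.1)))
    (hμp : μ p ≠ 0) :
    2 * ‖Delta f p‖ ^ 2
        / (‖pz f p‖ ^ 2 + ‖pw f p‖ ^ 2) ^ 3
      = 2 * ‖deriv (deriv g) 0‖ ^ 2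
        / (1 + ‖deriv g 0‖ ^ 2) ^ 3 := by
  set h := graphDefiningFun g p
  have hf : f =ᶠ[𝓝 p] fun q => c + μ q * h q :=
    eventually_of_mem (hV.mem_nhds hpV) fun q hq => eq_add_of_sub_eq' (heq q hq)
  have hμV : ∀ᶠ q in 𝓝 p, DifferentiableAt ℂ μ q :=
    eventually_of_mem (hV.mem_nhds hpV) fun q hq => hμ.differentiableAt (hV.mem_nhds hq)
  have hgW : ∀ᶠ z in 𝓝 0, DifferentiableAt ℂ g z :=
    eventually_of_mem (hW.mem_nhds h0W) fun z hz => hg.differentiableAt (hW.mem_nhds hz)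
  have hg' : DifferentiableAt ℂ (deriv g) 0 :=
    (hg.analyticAt (hW.mem_nhds h0W)).deriv.differentiableAt
  have hh := eventually_differentiableAt_graphDefiningFun (p := p) hgW
  have hh0 : h p = 0 := graphDefiningFun_self hg0
  rw [hf.Delta_eq, hf.pz.eq_of_nhds, hf.pw.eq_of_nhds, Delta_const_add, pz_const_add,
    pw_const_add, Delta_mul_of_eq_zero hμV (continuousAt_pz_s3 hV hμ hpV) (continuousAt_pw_s3 hV hμ hpV)
      hh (hasFDerivAt_pz_graphDefiningFun hgW hg').differentiableAt
      (hasFDerivAt_pw_graphDefiningFun hgW).differentiableAt hh0,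
    pz_mul_of_eq_zero hμV.self_of_nhds hh.self_of_nhds hh0,
    pw_mul_of_eq_zero hμV.self_of_nhds hh.self_of_nhds hh0, Delta_graphDefiningFun hgW hg',
    pz_graphDefiningFun_self hgW.self_of_nhds, pw_graphDefiningFun_self hgW.self_of_nhds,
    curvature_quotient_mul hμp, norm_neg, norm_one, one_pow, add_comm]

/-- if `f(z,w) − c = μ(z,w)·[(w − w₀) − g(z − z₀)]` near
`p = (z₀,w₀)`, with `f, μ` holomorphic near `p`, `g` holomorphic near `0`,
`g(0) = 0`, `μ(p) ≠ 0`, then the curvature expression of the level curve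
`f = c` at `p` agrees with that of the graph `w = w₀ + g(z − z₀)`:
`2|Δ_f(p)|²/(|f_z(p)|²+|f_w(p)|²)³ = 2|g''(0)|²/(1+|g'(0)|²)³`. -/
theorem stmt3 (p : ℂ × ℂ) (c : ℂ) (f μ : ℂ × ℂ → ℂ) (g : ℂ → ℂ)
    (V : Set (ℂ × ℂ)) (hV : IsOpen V) (hpV : p ∈ V)
    (hf : DifferentiableOn ℂ f V) (hμ : DifferentiableOn ℂ μ V)
    (W : Set ℂ) (hW : IsOpen W) (h0W : (0 : ℂ) ∈ W)
    (hg : DifferentiableOn ℂ g W) (hg0 : g 0 = 0)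
    (hVW : ∀ q ∈ V, q.1 - p.1 ∈ W)
    (heq : ∀ q ∈ V, f q - c = μ q * ((q.2 - p.2) - g (q.1 - p.1)))
    (hμp : μ p ≠ 0) :
    2 * ‖Delta f p‖ ^ 2
        / (‖pz f p‖ ^ 2 + ‖pw f p‖ ^ 2) ^ 3
      = 2 * ‖deriv (deriv g) 0‖ ^ 2
        / (1 + ‖deriv g 0‖ ^ 2) ^ 3 :=
  stmt3_general p c f μ g V hV hpV hμ W hW h0W hg hg0 heq hμp
end

section
/- Let f be holomorphic on an open set V ⊆ ℂ² and let γ be holomorphic on an open set U ⊆ ℂ. Define F(Z,W) := f(Z + γ(W), W) on the open set of pairs (Z,W) with W ∈ U and (Z + γ(W), W) ∈ V. Then for all such (Z,W): Δ_f(Z + γ(W), W) = Δ_F(Z,W) + γ''(W)·(F_Z(Z,W))³. -/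
/-!
A function that is holomorphic on an open subset of `ℂ²` is `C^∞` there. Near a point, take a
closed polydisc `D × K` in the domain. By the Cauchy integral formula in the first variable the
slices `z ↦ g (z, ·)` form a holomorphic map `D → C(K, E)`; consequently the `z`-derivative of `g`
is jointly continuous and, being a uniform limit of difference quotients, holomorphic in `w`. So
continuity and separate holomorphy pass from `g` to its partial derivatives, and continuous partial
derivatives make `g` differentiable (Osgood's lemma); iterating gives every order of smoothness.

For `F = f ∘ (Z, W) ↦ (Z + γ W, W)` the chain rule gives `F_Z = f_z` and `F_W = γ' f_z + f_w`.
Differentiating once more and using `f_zw = f_wz`, all terms of `Δ_F` containing `γ'` cancel and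
`Δ_F = Δ_f - γ'' f_z³`.
-/

open Set Metric Filter Topology Complex Real

variable {E : Type*} [NormedAddCommGroup E] [NormedSpace ℂ E]

/- Unlike `pz` and `pw`, these are derivatives of one-variable slices, so they make sense before
joint differentiability is known. -/
noncomputable def derivFst (g : ℂ × ℂ → E) (p : ℂ × ℂ) : E := deriv (fun z => g (z, p.2)) p.1

noncomputable def derivSnd (g : ℂ × ℂ → E) (p : ℂ × ℂ) : E := deriv (fun w => g (p.1, w)) p.2

structure SepHolomorphicOn (g : ℂ × ℂ → E) (Ω : Set (ℂ × ℂ)) : Prop where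
  continuousOn : ContinuousOn g Ω
  differentiableAt_fst : ∀ p ∈ Ω, DifferentiableAt ℂ (fun z => g (z, p.2)) p.1
  differentiableAt_snd : ∀ p ∈ Ω, DifferentiableAt ℂ (fun w => g (p.1, w)) p.2

theorem SepHolomorphicOn.swap {g : ℂ × ℂ → E} {Ω : Set (ℂ × ℂ)} (hg : SepHolomorphicOn g Ω) :
    SepHolomorphicOn (fun p => g p.swap) (Prod.swap ⁻¹' Ω) :=
  ⟨hg.continuousOn.comp continuous_swap.continuousOn fun _ hp => hp,
    fun p hp => hg.differentiableAt_snd p.swap hp, fun p hp => hg.differentiableAt_fst p.swap hp⟩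

theorem DifferentiableOn.sepHolomorphicOn {f : ℂ × ℂ → E} {Ω : Set (ℂ × ℂ)} (hΩ : IsOpen Ω)
    (hf : DifferentiableOn ℂ f Ω) : SepHolomorphicOn f Ω where
  continuousOn := hf.continuousOn
  differentiableAt_fst p hp := (hf.differentiableAt (hΩ.mem_nhds hp)).comp p.1 (by fun_prop)
  differentiableAt_snd p hp := (hf.differentiableAt (hΩ.mem_nhds hp)).comp p.2 (by fun_prop)

variable [CompleteSpace E]

theorem ContinuousLinearMap.circleIntegral_comp_comm {F : Type*} [NormedAddCommGroup F]
    [NormedSpace ℂ F] [CompleteSpace F] (L : E →L[ℂ] F) {f : ℂ → E} {c : ℂ} {R : ℝ}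
    (hf : CircleIntegrable f c R) :
    ∮ z in C(c, R), L (f z) = L (∮ z in C(c, R), f z) := by
  simp only [circleIntegral, ← L.map_smul]
  exact L.intervalIntegral_comp_comm hf.out

theorem exists_analyticOnNhd_continuousMap_eq {X : Type*} [TopologicalSpace X] [CompactSpace X]
    {h : ℂ → X → E} {a : ℂ} {r : ℝ}
    (hcont : ContinuousOn (Function.uncurry h) (closedBall a r ×ˢ univ))
    (hdiff : ∀ x, DifferentiableOn ℂ (h · x) (ball a r)) :
    ∃ Φ : ℂ → C(X, E), AnalyticOnNhd ℂ Φ (ball a r) ∧ ∀ z ∈ ball a r, ∀ x, Φ z x = h z x := by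
  classical
  rcases le_or_gt r 0 with hr | hr
  · exact ⟨0, by simp [ball_eq_empty.2 hr], by simp [ball_eq_empty.2 hr]⟩
  let G : C(closedBall a r × X, E) :=
    ⟨fun p => h p.1 p.2, hcont.comp_continuous (continuous_subtype_val.prodMap continuous_id)
      fun p => ⟨p.1.2, mem_univ _⟩⟩
  let Ψ : ℂ → C(X, E) := fun ζ => if hζ : ζ ∈ closedBall a r then G.curry ⟨ζ, hζ⟩ else 0
  have hΨ : ContinuousOn Ψ (sphere a r) := by
    refine ContinuousOn.mono ?_ sphere_subset_closedBall
    rw [continuousOn_iff_continuous_domRestrict]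
    convert G.curry.continuous using 1
    ext ζ : 1
    simp only [Ψ, domRestrict_apply, dif_pos ζ.2]
  -- `Φ` is the Cauchy integral of the slices `Ψ`, computed in the Banach space `C(X, E)`.
  have hΦ : AnalyticOnNhd ℂ (fun w => (2 * π * I : ℂ)⁻¹ • ∮ ζ in C(a, r), (ζ - w)⁻¹ • Ψ ζ)
      (ball a r) := by
    lift r to NNReal using hr.le
    simpa only [Metric.eball_coe] using
      (hasFPowerSeriesOn_cauchy_integral (hΨ.circleIntegrable r.2) hr).analyticOnNhd
  refine ⟨_, hΦ, fun z hz x => ?_⟩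
  have hDC : DiffContOnCl ℂ (h · x) (ball a r) := by
    refine ⟨hdiff x, ?_⟩
    rw [closure_ball a hr.ne']
    exact hcont.comp (continuous_id.prodMk continuous_const).continuousOn
      fun z hz => ⟨hz, mem_univ _⟩
  calc _ = (2 * π * I : ℂ)⁻¹ • ContinuousMap.evalCLM ℂ x (∮ ζ in C(a, r), (ζ - z)⁻¹ • Ψ ζ) := rfl
    _ = (2 * π * I : ℂ)⁻¹ • ∮ ζ in C(a, r), (ζ - z)⁻¹ • Ψ ζ x := by
        rw [← ContinuousLinearMap.circleIntegral_comp_comm]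
        · simp only [map_smul, ContinuousMap.evalCLM_apply]
        refine ContinuousOn.circleIntegrable hr.le (ContinuousOn.fun_smul ?_ hΨ)
        refine ContinuousOn.inv₀ (by fun_prop) fun ζ hζ hζz => ?_
        rw [sub_eq_zero.1 hζz] at hζ
        exact (mem_ball.1 hz).ne (mem_sphere.1 hζ)
    _ = (2 * π * I : ℂ)⁻¹ • ∮ ζ in C(a, r), (ζ - z)⁻¹ • h ζ x := by
        congr 1
        refine circleIntegral.integral_congr hr.le fun ζ hζ => ?_
        simp only [Ψ, dif_pos (sphere_subset_closedBall hζ)]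
        rfl
    _ = h z x := hDC.two_pi_i_inv_smul_circleIntegral_sub_inv_smul hz

namespace SepHolomorphicOn

variable {g : ℂ × ℂ → E} {Ω : Set (ℂ × ℂ)} {a b : ℂ} {r : ℝ}

theorem exists_analyticOnNhd_derivFst_eq (hg : SepHolomorphicOn g Ω)
    (hsub : closedBall a r ×ˢ closedBall b r ⊆ Ω) :
    ∃ Φ : ℂ → C(closedBall b r, E), AnalyticOnNhd ℂ Φ (ball a r) ∧
      ∀ z ∈ ball a r, ∀ x : closedBall b r, Φ z x = g (z, x) ∧ deriv Φ z x = derivFst g (z, x) := by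
  have : CompactSpace (closedBall b r) := isCompact_iff_compactSpace.1 (isCompact_closedBall b r)
  obtain ⟨Φ, hΦ, hΦg⟩ := exists_analyticOnNhd_continuousMap_eq
    (h := fun z (x : closedBall b r) => g (z, x)) (a := a)
    (hg.continuousOn.comp (by fun_prop) fun p hp => hsub ⟨hp.1, p.2.2⟩)
    (fun x z hz => (hg.differentiableAt_fst (z, x)
      (hsub ⟨ball_subset_closedBall hz, x.2⟩)).differentiableWithinAt)
  refine ⟨Φ, hΦ, fun z hz x => ⟨hΦg z hz x, ?_⟩⟩
  have hΦx : HasDerivAt (fun z => Φ z x) (deriv Φ z x) z := by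
    have := (ContinuousMap.evalCLM ℂ x).hasFDerivAt.comp_hasDerivAt z
      (hΦ z hz).differentiableAt.hasDerivAt
    exact this
  refine ((hΦx.congr_of_eventuallyEq ?_).deriv).symm
  filter_upwards [isOpen_ball.mem_nhds hz] with ζ hζ using (hΦg ζ hζ x).symm

theorem continuousAt_derivFst (hg : SepHolomorphicOn g Ω) (hr : 0 < r)
    (hsub : closedBall a r ×ˢ closedBall b r ⊆ Ω) : ContinuousAt (derivFst g) (a, b) := by
  obtain ⟨Φ, hΦ, hΦg⟩ := hg.exists_analyticOnNhd_derivFst_eq hsub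
  have hcont : ContinuousOn (derivFst g) (ball a r ×ˢ closedBall b r) := by
    rw [continuousOn_iff_continuous_domRestrict]
    have : (ball a r ×ˢ closedBall b r).domRestrict (derivFst g)
        = fun q => deriv Φ q.1.1 ⟨q.1.2, q.2.2⟩ :=
      funext fun q => (hΦg _ q.2.1 ⟨_, q.2.2⟩).2.symm
    rw [this]
    refine continuous_eval.comp (Continuous.prodMk ?_ (by fun_prop))
    exact hΦ.deriv.continuousOn.comp_continuous (by fun_prop) fun q => q.2.1
  exact hcont.continuousAt (prod_mem_nhds (ball_mem_nhds a hr) (closedBall_mem_nhds b hr))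

theorem differentiableAt_derivFst_snd (hg : SepHolomorphicOn g Ω) (hr : 0 < r)
    (hsub : closedBall a r ×ˢ closedBall b r ⊆ Ω) :
    DifferentiableAt ℂ (fun w => derivFst g (a, w)) b := by
  obtain ⟨Φ, hΦ, hΦg⟩ := hg.exists_analyticOnNhd_derivFst_eq hsub
  have ha : a ∈ ball a r := mem_ball_self hr
  have hnear : ∀ᶠ t in 𝓝[≠] (0 : ℂ), a + t ∈ ball a r :=
    nhdsWithin_le_nhds ((continuous_const.add continuous_id).tendsto' 0 a (add_zero a)
      |>.eventually (isOpen_ball.mem_nhds ha))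
  -- Convergence of the slopes of `Φ` in `C(closedBall b r, E)` is uniform convergence on the disc.
  have hslope : TendstoUniformlyOn (fun t w => t⁻¹ • (g (a + t, w) - g (a, w)))
      (fun w => derivFst g (a, w)) (𝓝[≠] 0) (closedBall b r) := by
    have := ContinuousMap.tendsto_iff_tendstoUniformly.1
      (hasDerivAt_iff_tendsto_slope_zero.1 (hΦ a ha).differentiableAt.hasDerivAt)
    rw [← tendstoUniformlyOn_univ] at this
    rw [tendstoUniformlyOn_iff_tendstoUniformly_comp_coe, ← tendstoUniformlyOn_univ]
    refine (this.congr ?_).congr_right fun x _ => (hΦg a ha x).2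
    filter_upwards [hnear] with t ht x _
    simp [(hΦg _ ht x).1, (hΦg a ha x).1]
  have hdiff : ∀ᶠ t in 𝓝[≠] (0 : ℂ),
      DifferentiableOn ℂ (fun w => t⁻¹ • (g (a + t, w) - g (a, w))) (ball b r) := by
    filter_upwards [hnear] with t ht w hw
    have hw' := ball_subset_closedBall hw
    exact (((hg.differentiableAt_snd (a + t, w) (hsub ⟨ball_subset_closedBall ht, hw'⟩)).sub
      (hg.differentiableAt_snd (a, w) (hsub ⟨mem_closedBall_self hr.le, hw'⟩))).const_smul
        _).differentiableWithinAt
  exact ((hslope.mono ball_subset_closedBall).tendstoLocallyUniformlyOn.differentiableOn hdiff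
    isOpen_ball).differentiableAt (ball_mem_nhds b hr)

theorem derivFst (hΩ : IsOpen Ω) (hg : SepHolomorphicOn g Ω) :
    SepHolomorphicOn (_root_.derivFst g) Ω := by
  have hpolydisc : ∀ p ∈ Ω, ∃ r > 0, closedBall p.1 r ×ˢ closedBall p.2 r ⊆ Ω := fun p hp => by
    simpa only [closedBall_prod_same] using nhds_basis_closedBall.mem_iff.1 (hΩ.mem_nhds hp)
  refine ⟨fun p hp => ?_, fun p hp => ?_, fun p hp => ?_⟩
  · obtain ⟨r, hr, hsub⟩ := hpolydisc p hp
    exact (hg.continuousAt_derivFst hr hsub).continuousWithinAt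
  · have hslice : IsOpen {z | (z, p.2) ∈ Ω} := hΩ.preimage (by fun_prop)
    have hdiff : DifferentiableOn ℂ (fun z => g (z, p.2)) {z | (z, p.2) ∈ Ω} :=
      fun z hz => (hg.differentiableAt_fst (z, p.2) hz).differentiableWithinAt
    exact (hdiff.deriv hslice).differentiableAt (hslice.mem_nhds hp)
  · obtain ⟨r, hr, hsub⟩ := hpolydisc p hp
    exact hg.differentiableAt_derivFst_snd hr hsub

theorem derivSnd (hΩ : IsOpen Ω) (hg : SepHolomorphicOn g Ω) :
    SepHolomorphicOn (_root_.derivSnd g) Ω :=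
  (hg.swap.derivFst (hΩ.preimage continuous_swap)).swap

theorem hasStrictFDerivAt (hΩ : IsOpen Ω) (hg : SepHolomorphicOn g Ω) {u : ℂ × ℂ} (hu : u ∈ Ω) :
    HasStrictFDerivAt g ((ContinuousLinearMap.toSpanSingleton ℂ (_root_.derivFst g u)).coprod
      (ContinuousLinearMap.toSpanSingleton ℂ (_root_.derivSnd g u))) u := by
  have hfst := (hg.derivFst hΩ).continuousOn.continuousAt (hΩ.mem_nhds hu)
  have hsnd := (hg.derivSnd hΩ).continuousOn.continuousAt (hΩ.mem_nhds hu)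
  refine hasStrictFDerivAt_uncurry_coprod (f := fun z w => g (z, w))
    (f₁ := fun z w => ContinuousLinearMap.toSpanSingleton ℂ (_root_.derivFst g (z, w)))
    (f₂ := fun z w => ContinuousLinearMap.toSpanSingleton ℂ (_root_.derivSnd g (z, w)))
    ?_ ?_ ?_ ?_
  · filter_upwards [hΩ.mem_nhds hu] with v hv using (hg.differentiableAt_fst v hv).hasDerivAt
  · filter_upwards [hΩ.mem_nhds hu] with v hv using (hg.differentiableAt_snd v hv).hasDerivAt
  · exact ContinuousLinearMap.toSpanSingletonCLE.continuous.continuousAt.comp hfst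
  · exact ContinuousLinearMap.toSpanSingletonCLE.continuous.continuousAt.comp hsnd

theorem differentiableOn (hΩ : IsOpen Ω) (hg : SepHolomorphicOn g Ω) :
    DifferentiableOn ℂ g Ω := fun _ hu =>
  (hg.hasStrictFDerivAt hΩ hu).differentiableAt.differentiableWithinAt

end SepHolomorphicOn

theorem DifferentiableOn.differentiableOn_fderiv {f : ℂ × ℂ → E} {Ω : Set (ℂ × ℂ)}
    (hΩ : IsOpen Ω) (hf : DifferentiableOn ℂ f Ω) : DifferentiableOn ℂ (fderiv ℂ f) Ω := by
  have hg := hf.sepHolomorphicOn hΩ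
  have hfst := (hg.derivFst hΩ).differentiableOn hΩ
  have hsnd := (hg.derivSnd hΩ).differentiableOn hΩ
  let L : E × E →L[ℂ] (ℂ × ℂ →L[ℂ] E) :=
    (ContinuousLinearMap.coprodEquivL ℂ).toContinuousLinearMap ∘L
      (ContinuousLinearMap.toSpanSingletonCLE.toContinuousLinearMap.prodMap
        ContinuousLinearMap.toSpanSingletonCLE.toContinuousLinearMap)
  refine (L.differentiable.comp_differentiableOn (hfst.prodMk hsnd)).congr fun u hu => ?_
  exact (hg.hasStrictFDerivAt hΩ hu).hasFDerivAt.fderiv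

theorem DifferentiableOn.contDiffOn_complex_prod {f : ℂ × ℂ → E} {Ω : Set (ℂ × ℂ)}
    (hΩ : IsOpen Ω) (hf : DifferentiableOn ℂ f Ω) (n : ℕ) : ContDiffOn ℂ n f Ω := by
  induction n generalizing E with
  | zero => exact contDiffOn_zero.2 hf.continuousOn
  | succ n ih =>
    exact (contDiffOn_succ_iff_fderiv_of_isOpen hΩ).2
      ⟨hf, by simp, ih (hf.differentiableOn_fderiv hΩ)⟩

section PartialDerivatives

variable {g h : ℂ × ℂ → ℂ} {x : ℂ × ℂ}

theorem Filter.EventuallyEq.pz_eq (hgh : g =ᶠ[𝓝 x] h) : pz g x = pz h x := by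
  rw [pz, pz, hgh.fderiv_eq]

theorem Filter.EventuallyEq.pw_eq (hgh : g =ᶠ[𝓝 x] h) : pw g x = pw h x := by
  rw [pw, pw, hgh.fderiv_eq]

theorem pw_add (hg : DifferentiableAt ℂ g x) (hh : DifferentiableAt ℂ h x) :
    pw (fun p => g p + h p) x = pw g x + pw h x := by
  simp [pw, fderiv_fun_add hg hh]

theorem pw_snd_mul {c : ℂ → ℂ} (hc : DifferentiableAt ℂ c x.2) (hh : DifferentiableAt ℂ h x) :
    pw (fun p => c p.2 * h p) x = deriv c x.2 * h x + c x.2 * pw h x := by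
  have hc' : HasFDerivAt (fun p : ℂ × ℂ => c p.2)
      (deriv c x.2 • ContinuousLinearMap.snd ℂ ℂ ℂ) x :=
    hc.hasDerivAt.comp_hasFDerivAt x hasFDerivAt_snd
  rw [pw, (hc'.fun_mul hh.hasFDerivAt).fderiv]
  simp [pw]
  ring

theorem ContDiffAt.differentiableAt_fderiv (hg : ContDiffAt ℂ 2 g x) :
    DifferentiableAt ℂ (fderiv ℂ g) x :=
  (hg.fderiv_right (m := 1) (by norm_num)).differentiableAt (by norm_num)

theorem ContDiffAt.differentiableAt_pz (hg : ContDiffAt ℂ 2 g x) : DifferentiableAt ℂ (pz g) x :=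
  hg.differentiableAt_fderiv.clm_apply (differentiableAt_const _)

theorem ContDiffAt.differentiableAt_pw (hg : ContDiffAt ℂ 2 g x) : DifferentiableAt ℂ (pw g) x :=
  hg.differentiableAt_fderiv.clm_apply (differentiableAt_const _)

theorem ContDiffAt.pz_pw (hg : ContDiffAt ℂ 2 g x) : pz (pw g) x = pw (pz g) x := by
  change fderiv ℂ (fun q => fderiv ℂ g q (0, 1)) x (1, 0)
    = fderiv ℂ (fun q => fderiv ℂ g q (1, 0)) x (0, 1)
  simpa [fderiv_clm_apply hg.differentiableAt_fderiv (differentiableAt_const _)]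
    using hg.isSymmSndFDerivAt (by simp) (1, 0) (0, 1)

end PartialDerivatives

noncomputable def shear (γ : ℂ → ℂ) (p : ℂ × ℂ) : ℂ × ℂ := (p.1 + γ p.2, p.2)

section Shear

variable {g : ℂ × ℂ → ℂ} {γ : ℂ → ℂ} {p : ℂ × ℂ}

theorem hasFDerivAt_shear (hγ : DifferentiableAt ℂ γ p.2) :
    HasFDerivAt (shear γ) ((ContinuousLinearMap.fst ℂ ℂ ℂ
      + deriv γ p.2 • ContinuousLinearMap.snd ℂ ℂ ℂ).prod (ContinuousLinearMap.snd ℂ ℂ ℂ)) p :=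
  (hasFDerivAt_fst.add (hγ.hasDerivAt.comp_hasFDerivAt p hasFDerivAt_snd)).prodMk hasFDerivAt_snd

theorem pz_comp_shear (hg : DifferentiableAt ℂ g (shear γ p)) (hγ : DifferentiableAt ℂ γ p.2) :
    pz (g ∘ shear γ) p = pz g (shear γ p) := by
  simp [pz, (hg.hasFDerivAt.comp p (hasFDerivAt_shear hγ)).fderiv]

theorem pw_comp_shear (hg : DifferentiableAt ℂ g (shear γ p)) (hγ : DifferentiableAt ℂ γ p.2) :
    pw (g ∘ shear γ) p = deriv γ p.2 * pz g (shear γ p) + pw g (shear γ p) := by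
  have hlin : ((deriv γ p.2, 1) : ℂ × ℂ) = deriv γ p.2 • (1, 0) + (0, 1) := by simp
  rw [pw, (hg.hasFDerivAt.comp p (hasFDerivAt_shear hγ)).fderiv]
  simp only [ContinuousLinearMap.comp_apply, ContinuousLinearMap.prod_apply,
    _root_.add_apply, _root_.smul_apply, ContinuousLinearMap.coe_fst',
    ContinuousLinearMap.coe_snd', smul_eq_mul, zero_add, mul_one]
  rw [hlin, map_add, map_smul, smul_eq_mul, pz, pw]

theorem eventually_differentiableAt_shear (hγ : ∀ᶠ w in 𝓝 p.2, DifferentiableAt ℂ γ w)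
    (hg : ContDiffAt ℂ 2 g (shear γ p)) :
    ∀ᶠ q in 𝓝 p, DifferentiableAt ℂ γ q.2 ∧ DifferentiableAt ℂ g (shear γ q) :=
  (continuous_snd.continuousAt.eventually hγ).and
    ((hasFDerivAt_shear hγ.self_of_nhds).continuousAt.eventually
      ((hg.eventually (by simp)).mono fun _ h => h.differentiableAt (by norm_num)))

theorem pz_comp_shear_eventuallyEq (hγ : ∀ᶠ w in 𝓝 p.2, DifferentiableAt ℂ γ w)
    (hg : ContDiffAt ℂ 2 g (shear γ p)) : pz (g ∘ shear γ) =ᶠ[𝓝 p] pz g ∘ shear γ :=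
  (eventually_differentiableAt_shear hγ hg).mono fun _ hq => pz_comp_shear hq.2 hq.1

theorem pz_pz_comp_shear (hγ : ∀ᶠ w in 𝓝 p.2, DifferentiableAt ℂ γ w)
    (hg : ContDiffAt ℂ 2 g (shear γ p)) :
    pz (pz (g ∘ shear γ)) p = pz (pz g) (shear γ p) :=
  (pz_comp_shear_eventuallyEq hγ hg).pz_eq.trans
    (pz_comp_shear hg.differentiableAt_pz hγ.self_of_nhds)

theorem pw_pz_comp_shear (hγ : ∀ᶠ w in 𝓝 p.2, DifferentiableAt ℂ γ w)
    (hg : ContDiffAt ℂ 2 g (shear γ p)) :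
    pw (pz (g ∘ shear γ)) p = deriv γ p.2 * pz (pz g) (shear γ p) + pw (pz g) (shear γ p) :=
  (pz_comp_shear_eventuallyEq hγ hg).pw_eq.trans
    (pw_comp_shear hg.differentiableAt_pz hγ.self_of_nhds)

theorem pw_pw_comp_shear (hγ : ∀ᶠ w in 𝓝 p.2, DifferentiableAt ℂ γ w)
    (hγ' : DifferentiableAt ℂ (deriv γ) p.2) (hg : ContDiffAt ℂ 2 g (shear γ p)) :
    pw (pw (g ∘ shear γ)) p = deriv (deriv γ) p.2 * pz g (shear γ p)
      + deriv γ p.2 * (deriv γ p.2 * pz (pz g) (shear γ p) + pw (pz g) (shear γ p))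
      + (deriv γ p.2 * pz (pw g) (shear γ p) + pw (pw g) (shear γ p)) := by
  have hshear := (hasFDerivAt_shear hγ.self_of_nhds).differentiableAt
  have hpw : pw (g ∘ shear γ) =ᶠ[𝓝 p]
      fun q => deriv γ q.2 * (pz g ∘ shear γ) q + (pw g ∘ shear γ) q :=
    (eventually_differentiableAt_shear hγ hg).mono fun _ hq => pw_comp_shear hq.2 hq.1
  rw [hpw.pw_eq, pw_add, pw_snd_mul hγ', pw_comp_shear hg.differentiableAt_pz hγ.self_of_nhds,
    pw_comp_shear hg.differentiableAt_pw hγ.self_of_nhds]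
  · rfl
  · exact hg.differentiableAt_pz.comp p hshear
  · exact (hγ'.comp p differentiableAt_snd).mul (hg.differentiableAt_pz.comp p hshear)
  · exact hg.differentiableAt_pw.comp p hshear

theorem Delta_comp_shear (hγ : ∀ᶠ w in 𝓝 p.2, DifferentiableAt ℂ γ w)
    (hγ' : DifferentiableAt ℂ (deriv γ) p.2) (hg : ContDiffAt ℂ 2 g (shear γ p)) :
    Delta g (shear γ p) = Delta (g ∘ shear γ) p + deriv (deriv γ) p.2 * pz (g ∘ shear γ) p ^ 3 := by
  have hgp := hg.differentiableAt (by norm_num)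
  simp only [Delta, pz_pz_comp_shear hγ hg, pw_pz_comp_shear hγ hg, pw_pw_comp_shear hγ hγ' hg,
    pz_comp_shear hgp hγ.self_of_nhds, pw_comp_shear hgp hγ.self_of_nhds, hg.pz_pw]
  ring

end Shear

/-- for `f` holomorphic on an open `V ⊆ ℂ²`, `γ` holomorphic on
an open `U ⊆ ℂ`, and `F(Z,W) := f(Z + γ(W), W)`, one has
`Δ_f(Z + γ(W), W) = Δ_F(Z,W) + γ''(W)·F_Z(Z,W)³` for all `(Z,W)` with
`W ∈ U` and `(Z + γ(W), W) ∈ V`. -/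
theorem stmt5 (V : Set (ℂ × ℂ)) (hV : IsOpen V) (f : ℂ × ℂ → ℂ)
    (hf : DifferentiableOn ℂ f V)
    (U : Set ℂ) (hU : IsOpen U) (γ : ℂ → ℂ) (hγ : DifferentiableOn ℂ γ U)
    (F : ℂ × ℂ → ℂ) (hF : ∀ q : ℂ × ℂ, F q = f (q.1 + γ q.2, q.2)) :
    ∀ q : ℂ × ℂ, q.2 ∈ U → (q.1 + γ q.2, q.2) ∈ V →
      Delta f (q.1 + γ q.2, q.2)
        = Delta F q + deriv (deriv γ) q.2 * (pz F q) ^ 3 := by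
  intro q hqU hqV
  obtain rfl : F = f ∘ shear γ := funext hF
  have hγ_near : ∀ᶠ w in 𝓝 q.2, DifferentiableAt ℂ γ w :=
    eventually_of_mem (hU.mem_nhds hqU) fun w hw => hγ.differentiableAt (hU.mem_nhds hw)
  have hγ' : DifferentiableAt ℂ (deriv γ) q.2 := (hγ.deriv hU).differentiableAt (hU.mem_nhds hqU)
  have hf2 : ContDiffAt ℂ 2 f (shear γ q) :=
    (hf.contDiffOn_complex_prod hV 2).contDiffAt (hV.mem_nhds hqV)
  exact Delta_comp_shear hγ_near hγ' hf2
end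

section
/- Let H(z,w) = c·∏_{i=1}^r (z − z_i w)^{m_i} ∈ ℂ[z,w], where c ≠ 0, the z_i ∈ ℂ are pairwise distinct, r ≥ 2, m_i ≥ 1, and m := Σ m_i. Set G(u) := ∏_{i=1}^r (u − z_i)^{m_i − 1} ∈ ℂ[u]. Then G(u) divides both one-variable polynomials H_z(u,1) and H_w(u,1); writing H_z(u,1) = G(u)·P(u) and H_w(u,1) = G(u)·Q(u), the polynomials P and Q are coprime in ℂ[u], P has degree exactly r − 1 with leading coefficient m·c, and Q has degree at most r − 1. (Hence the rational map u ↦ H_z(u,1)/H_w(u,1) has degree r − 1.) -/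
/-!
Each linear factor `ℓᵢ = z - zᵢ w` of `H` occurs with multiplicity `mᵢ`, so by the Leibniz rule
every partial derivative of `H` is `∏ ℓᵢ ^ (mᵢ - 1)` times `c ∑ mᵢ ∂ℓᵢ ∏_{j ≠ i} ℓⱼ`. Setting
`w = 1` gives `P = c ∑ mᵢ Eᵢ` and `Q = -c ∑ mᵢ zᵢ Eᵢ` with `Eᵢ = ∏_{j ≠ i} (u - zⱼ)` monic of
degree `r - 1`, so the coefficient of `u ^ (r - 1)` in `P` is `c m`. Euler's relation
`u P + Q = c m ∏ⱼ (u - zⱼ)` reduces the coprimality of `P` and `Q` to `P(zₖ) ≠ 0`, and indeed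
`P(zₖ) = c mₖ ∏_{j ≠ k} (zₖ - zⱼ)`.
-/

namespace Derivation

variable {R A M ι : Type*} [CommSemiring R] [CommSemiring A] [Algebra R A] [AddCommMonoid M]
  [Module A M] [Module R M] (D : Derivation R A M) [DecidableEq ι]

theorem leibniz_prod (s : Finset ι) (f : ι → A) :
    D (∏ i ∈ s, f i) = ∑ i ∈ s, (∏ j ∈ s.erase i, f j) • D (f i) := by
  induction s using Finset.induction_on with
  | empty => simp
  | insert a s ha ih =>
    rw [Finset.prod_insert ha, leibniz, ih, Finset.sum_insert ha, Finset.erase_insert ha,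
      Finset.smul_sum, add_comm]
    congr 1
    refine Finset.sum_congr rfl fun j hj => ?_
    rw [Finset.erase_insert_of_ne (ne_of_mem_of_not_mem hj ha).symm,
      Finset.prod_insert fun h => ha (Finset.mem_of_mem_erase h), smul_smul]

theorem leibniz_prod_pow (s : Finset ι) (f : ι → A) {n : ι → ℕ} (hn : ∀ i ∈ s, n i ≠ 0) :
    D (∏ i ∈ s, f i ^ n i) =
      (∏ i ∈ s, f i ^ (n i - 1)) • ∑ i ∈ s, n i • (∏ j ∈ s.erase i, f j) • D (f i) := by
  rw [leibniz_prod, Finset.smul_sum]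
  refine Finset.sum_congr rfl fun i hi => ?_
  have hsplit : ∀ j ∈ s, f j ^ n j = f j ^ (n j - 1) * f j := fun j hj => by
    rw [← pow_succ, Nat.sub_add_cancel (Nat.one_le_iff_ne_zero.mpr (hn j hj))]
  have hprod : (∏ j ∈ s.erase i, f j ^ n j) * f i ^ (n i - 1) =
      (∏ j ∈ s, f j ^ (n j - 1)) * ∏ j ∈ s.erase i, f j := by
    rw [Finset.prod_congr rfl fun j hj => hsplit j (Finset.mem_of_mem_erase hj),
      Finset.prod_mul_distrib, ← Finset.prod_erase_mul _ _ hi]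
    ring
  rw [leibniz_pow, smul_comm _ (n i), smul_smul, hprod, ← smul_smul, smul_comm (n i)]

end Derivation

namespace Lagrange

open Polynomial Finset

variable {R F ι : Type*} [DecidableEq ι] {s : Finset ι} {v : ι → R}

/-- `nodal s v * ∑ i ∈ s, a i / (X - v i)`; with `a i = n i` it is the derivative of
`∏ i ∈ s, (X - v i) ^ n i` divided by `∏ i ∈ s, (X - v i) ^ (n i - 1)`. -/
noncomputable def weightedNodal [CommRing R] (s : Finset ι) (v a : ι → R) : R[X] :=
  ∑ i ∈ s, C (a i) * nodal (s.erase i) v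

section CommRing

variable [CommRing R]

theorem natDegree_weightedNodal_le (a : ι → R) : (weightedNodal s v a).natDegree ≤ #s - 1 := by
  nontriviality R
  refine natDegree_sum_le_of_forall_le _ _ fun i hi => (natDegree_C_mul_le _ _).trans ?_
  rw [natDegree_nodal, card_erase_of_mem hi]

theorem coeff_weightedNodal [Nontrivial R] (a : ι → R) :
    (weightedNodal s v a).coeff (#s - 1) = ∑ i ∈ s, a i := by
  rw [weightedNodal, finsetSum_coeff]
  refine sum_congr rfl fun i hi => ?_
  have hdeg : (nodal (s.erase i) v).natDegree = #s - 1 := by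
    rw [natDegree_nodal, card_erase_of_mem hi]
  rw [coeff_C_mul, ← hdeg, ← leadingCoeff, nodal_monic.leadingCoeff, mul_one]

theorem eval_weightedNodal_node (a : ι → R) {k : ι} (hk : k ∈ s) :
    (weightedNodal s v a).eval (v k) = a k * (nodal (s.erase k) v).eval (v k) := by
  rw [weightedNodal, eval_finsetSum, sum_eq_single_of_mem k hk fun i _ hik => ?_]
  · rw [eval_mul, eval_C]
  · rw [eval_mul, eval_nodal_at_node (mem_erase.mpr ⟨hik.symm, hk⟩), mul_zero]

theorem X_mul_weightedNodal_sub (a : ι → R) :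
    X * weightedNodal s v a - weightedNodal s v (a * v) = C (∑ i ∈ s, a i) * nodal s v := by
  rw [weightedNodal, weightedNodal, mul_sum, ← sum_sub_distrib, map_sum, sum_mul]
  refine sum_congr rfl fun i hi => ?_
  rw [nodal_eq_mul_nodal_erase hi, Pi.mul_apply, C_mul]
  ring

end CommRing

section Field

variable [Field F] {v : ι → F}

theorem natDegree_weightedNodal {a : ι → F} (ha : ∑ i ∈ s, a i ≠ 0) :
    (weightedNodal s v a).natDegree = #s - 1 :=
  natDegree_eq_of_le_of_coeff_ne_zero (natDegree_weightedNodal_le a)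
    (by rwa [coeff_weightedNodal])

theorem leadingCoeff_weightedNodal {a : ι → F} (ha : ∑ i ∈ s, a i ≠ 0) :
    (weightedNodal s v a).leadingCoeff = ∑ i ∈ s, a i := by
  rw [leadingCoeff, natDegree_weightedNodal ha, coeff_weightedNodal]

theorem isCoprime_weightedNodal (hvs : Set.InjOn v s) {a : ι → F} (ha : ∀ i ∈ s, a i ≠ 0)
    (hsum : ∑ i ∈ s, a i ≠ 0) : IsCoprime (weightedNodal s v a) (weightedNodal s v (a * v)) := by
  have hnode : ∀ i ∈ s, IsCoprime (weightedNodal s v a) (X - C (v i)) := fun i hi => by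
    refine ((irreducible_X_sub_C (v i)).coprime_iff_not_dvd.mpr ?_).symm
    rw [dvd_iff_isRoot, IsRoot, eval_weightedNodal_node a hi]
    refine mul_ne_zero (ha i hi) (eval_nodal_not_at_node fun j hj hij => ?_)
    exact ne_of_mem_erase hj (hvs (mem_of_mem_erase hj) hi hij.symm)
  have hnodal : IsCoprime (weightedNodal s v a)
      (X * weightedNodal s v a - weightedNodal s v (a * v)) := by
    rw [X_mul_weightedNodal_sub, isCoprime_mul_unit_left_right (isUnit_C.mpr (Ne.isUnit hsum))]
    exact IsCoprime.prod_right hnode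
  exact IsCoprime.mul_sub_right_right_iff.mp hnodal

end Field

end Lagrange

open MvPolynomial

/-- Substitution `w = 1`, `z = u`: the algebra map sending a polynomial
`H(z,w)` to the one-variable polynomial `H(u,1)`. -/
noncomputable def subW1 : MvPolynomial (Fin 2) ℂ →ₐ[ℂ] Polynomial ℂ :=
  aeval ![Polynomial.X, 1]

section BinaryForm

variable {R : Type*} [CommRing R]

theorem pderiv_zero_X_sub_C_mul_X (a : R) :
    pderiv 0 (X 0 - C a * X 1 : MvPolynomial (Fin 2) R) = 1 := by
  simp

theorem pderiv_one_X_sub_C_mul_X (a : R) :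
    pderiv 1 (X 0 - C a * X 1 : MvPolynomial (Fin 2) R) = -C a := by
  simp

open Lagrange

variable {ι : Type*} [DecidableEq ι] (s : Finset ι) (z : ι → ℂ) {mi : ι → ℕ}

theorem subW1_C (a : ℂ) : subW1 (C a) = Polynomial.C a :=
  algHom_C _ a

theorem subW1_X_sub_C_mul_X (a : ℂ) :
    subW1 (X 0 - C a * X 1) = Polynomial.X - Polynomial.C a := by
  simp [subW1]

theorem subW1_pderiv_prod_pow (k : Fin 2) (hmi : ∀ i ∈ s, mi i ≠ 0) :
    subW1 (pderiv k (∏ i ∈ s, (X 0 - C (z i) * X 1) ^ mi i)) =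
      (∏ i ∈ s, (Polynomial.X - Polynomial.C (z i)) ^ (mi i - 1)) *
        ∑ i ∈ s, mi i • (nodal (s.erase i) z * subW1 (pderiv k (X 0 - C (z i) * X 1))) := by
  simp [Derivation.leibniz_prod_pow _ _ _ hmi, subW1_X_sub_C_mul_X, nodal]

theorem subW1_pderiv_zero (c : ℂ) (hmi : ∀ i ∈ s, mi i ≠ 0) :
    subW1 (pderiv 0 (C c * ∏ i ∈ s, (X 0 - C (z i) * X 1) ^ mi i)) =
      (∏ i ∈ s, (Polynomial.X - Polynomial.C (z i)) ^ (mi i - 1)) *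
        weightedNodal s z (fun i => c * mi i) := by
  rw [pderiv_C_mul, map_mul, subW1_pderiv_prod_pow s z 0 hmi, mul_left_comm, weightedNodal,
    Finset.mul_sum]
  congr 1
  refine Finset.sum_congr rfl fun i _ => ?_
  simp only [pderiv_zero_X_sub_C_mul_X, map_one, mul_one, nsmul_eq_mul, subW1_C, map_mul,
    map_natCast]
  ring

theorem subW1_pderiv_one (c : ℂ) (hmi : ∀ i ∈ s, mi i ≠ 0) :
    subW1 (pderiv 1 (C c * ∏ i ∈ s, (X 0 - C (z i) * X 1) ^ mi i)) =
      (∏ i ∈ s, (Polynomial.X - Polynomial.C (z i)) ^ (mi i - 1)) *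
        -weightedNodal s z ((fun i => c * mi i) * z) := by
  rw [pderiv_C_mul, map_mul, subW1_pderiv_prod_pow s z 1 hmi, mul_left_comm, weightedNodal,
    Finset.mul_sum, ← Finset.sum_neg_distrib]
  congr 1
  refine Finset.sum_congr rfl fun i _ => ?_
  simp only [pderiv_one_X_sub_C_mul_X, map_neg, subW1_C, nsmul_eq_mul, Pi.mul_apply, map_mul,
    map_natCast]
  ring

end BinaryForm

/-- let `H = c·∏ᵢ (z − zᵢw)^{mᵢ}` with `c ≠ 0`, the `zᵢ` pairwise
distinct, `r ≥ 2`, `mᵢ ≥ 1`, `m = Σ mᵢ`, and set `G(u) = ∏ᵢ (u − zᵢ)^{mᵢ−1}`.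
Then `G` divides the one-variable polynomials `H_z(u,1)` and `H_w(u,1)`, and
writing `H_z(u,1) = G·P`, `H_w(u,1) = G·Q`, the polynomials `P, Q` are coprime,
`P` has degree exactly `r − 1` with leading coefficient `m·c`, and `Q` has
degree at most `r − 1`. -/
theorem stmt9 (r : ℕ) (hr : 2 ≤ r) (c : ℂ) (hc : c ≠ 0) (z : Fin r → ℂ)
    (hz : Function.Injective z) (mi : Fin r → ℕ) (hmi : ∀ i, 1 ≤ mi i)
    (m : ℕ) (hm : m = ∑ i, mi i)
    (H : MvPolynomial (Fin 2) ℂ)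
    (hH : H = C c * ∏ i, (X (0 : Fin 2) - C (z i) * X (1 : Fin 2)) ^ mi i)
    (G : Polynomial ℂ)
    (hG : G = ∏ i, (Polynomial.X - Polynomial.C (z i)) ^ (mi i - 1)) :
    G ∣ subW1 (pderiv (0 : Fin 2) H) ∧
    G ∣ subW1 (pderiv (1 : Fin 2) H) ∧
    ∀ P Q : Polynomial ℂ,
      subW1 (pderiv (0 : Fin 2) H) = G * P →
      subW1 (pderiv (1 : Fin 2) H) = G * Q →
      IsCoprime P Q ∧
      P.natDegree = r - 1 ∧ P.leadingCoeff = (m : ℂ) * c ∧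
      Q.degree ≤ (r - 1 : ℕ) := by
  have hmi₀ : ∀ i ∈ Finset.univ, mi i ≠ 0 := fun i _ => Nat.one_le_iff_ne_zero.mp (hmi i)
  have hm₀ : m ≠ 0 :=
    hm ▸ (Finset.sum_pos (fun i _ => hmi i) ⟨⟨0, by omega⟩, Finset.mem_univ _⟩).ne'
  have hsum : ∑ i, c * mi i = m * c := by simp [hm, ← Finset.mul_sum, mul_comm]
  have hsum₀ : ∑ i, c * mi i ≠ 0 := hsum ▸ mul_ne_zero (Nat.cast_ne_zero.mpr hm₀) hc
  have hG₀ : G ≠ 0 :=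
    hG ▸ Finset.prod_ne_zero_iff.mpr fun i _ => pow_ne_zero _ (Polynomial.X_sub_C_ne_zero _)
  rw [hH, subW1_pderiv_zero _ _ _ hmi₀, subW1_pderiv_one _ _ _ hmi₀, ← hG]
  refine ⟨dvd_mul_right _ _, dvd_mul_right _ _, fun P Q hP hQ => ?_⟩
  obtain rfl := mul_left_cancel₀ hG₀ hP
  obtain rfl := mul_left_cancel₀ hG₀ hQ
  have hcard : (Finset.univ : Finset (Fin r)).card = r := by simp
  have ha₀ : ∀ i ∈ Finset.univ, c * mi i ≠ 0 := fun i hi =>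
    mul_ne_zero hc (Nat.cast_ne_zero.mpr (hmi₀ i hi))
  refine ⟨(Lagrange.isCoprime_weightedNodal hz.injOn ha₀ hsum₀).neg_right, ?_, ?_, ?_⟩
  · rw [Lagrange.natDegree_weightedNodal hsum₀, hcard]
  · rw [Lagrange.leadingCoeff_weightedNodal hsum₀, hsum]
  · rw [Polynomial.degree_neg]
    exact Polynomial.degree_le_of_natDegree_le
      ((Lagrange.natDegree_weightedNodal_le _).trans_eq (by rw [hcard]))
end

section
/- Let p : ℂ → ℂ be a polynomial of degree n ≥ 1 and let φ : ℂ → [0,∞] be a measurable function. Then ∫_ℂ φ(p(u))·|p'(u)|² dλ(u) = n · ∫_ℂ φ(w) dλ(w), where λ is Lebesgue measure on ℂ. -/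
/-!
On the open set where `p' ≠ 0` the map `p` is a local diffeomorphism of `ℝ²`, so that set splits
into countably many measurable pieces on each of which `p` is injective. Summing the injective
change of variables formula over the pieces gives the area formula
`∫_U |det Dp| · φ ∘ p = ∫ #(U ∩ p⁻¹{w}) · φ(w) dw`. The critical points contribute nothing to the
left-hand side because the Jacobian `|p'|²` vanishes there, and the critical values form a null set
(the image of a set on which the Jacobian vanishes is null).
Every other value `w` is attained exactly `deg p` times, at the simple roots of `p - w`.
-/

open MeasureTheory Set Filter Topology Function
open scoped ENNReal

theorem exists_measurable_partition_injOn {X Y : Type*} [TopologicalSpace X]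
    [SecondCountableTopology X] [MeasurableSpace X] [OpensMeasurableSpace X] {f : X → Y}
    {s : Set X} (hs : MeasurableSet s) (hf : ∀ x ∈ s, ∃ t ∈ 𝓝 x, InjOn f t) :
    ∃ V : ℕ → Set X, (∀ k, MeasurableSet (V k)) ∧ Pairwise (Disjoint on V) ∧
      ⋃ k, V k = s ∧ ∀ k, InjOn f (V k) := by
  have hloc : ∀ x, ∃ u, IsOpen u ∧ (x ∈ s → x ∈ u) ∧ InjOn f u := by
    intro x
    by_cases hx : x ∈ s
    · obtain ⟨t, ht, hft⟩ := hf x hx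
      obtain ⟨u, hut, hu, hxu⟩ := mem_nhds_iff.1 ht
      exact ⟨u, hu, fun _ => hxu, hft.mono hut⟩
    · exact ⟨∅, isOpen_empty, hx.elim, injOn_empty f⟩
  choose u hu_open hu_mem hu_inj using hloc
  obtain ⟨t, -, htc, hst⟩ := TopologicalSpace.countable_cover_nhdsWithin fun x hx =>
    mem_nhdsWithin_of_mem_nhds ((hu_open x).mem_nhds (hu_mem x hx))
  -- `∅` is added so that the family of pieces is nonempty and can be enumerated by `ℕ`
  obtain ⟨g, hg⟩ := ((htc.image u).insert ∅).exists_eq_range (insert_nonempty _ _)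
  have hg_open : ∀ k, IsOpen (g k) ∧ InjOn f (g k) := by
    intro k
    have hk : g k ∈ insert ∅ (u '' t) := hg ▸ mem_range_self k
    rcases hk with hk | ⟨x, -, hx⟩
    · exact hk ▸ ⟨isOpen_empty, injOn_empty f⟩
    · exact hx ▸ ⟨hu_open x, hu_inj x⟩
  refine ⟨disjointed fun k => g k ∩ s,
    MeasurableSet.disjointed fun k => (hg_open k).1.measurableSet.inter hs, disjoint_disjointed _,
    ?_, fun k => (hg_open k).2.mono ((disjointed_subset _ k).trans inter_subset_left)⟩
  rw [iUnion_disjointed, ← iUnion_inter, inter_eq_right]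
  refine hst.trans (iUnion₂_subset fun x hx => ?_)
  obtain ⟨k, hk⟩ : u x ∈ range g := hg ▸ mem_insert_of_mem _ (mem_image_of_mem u hx)
  exact hk ▸ subset_iUnion g k

theorem tsum_indicator_image_eq_count_preimage {ι X Y : Type*} [Countable ι] [MeasurableSpace X]
    [MeasurableSingletonClass X] {f : X → Y} {V : ι → Set X} (hd : Pairwise (Disjoint on V))
    (hinj : ∀ k, InjOn f (V k)) (y : Y) :
    ∑' k, (f '' V k).indicator 1 y = Measure.count ((⋃ k, V k) ∩ f ⁻¹' {y}) := by
  have hfib : ∀ k, (V k ∩ f ⁻¹' {y}).Subsingleton := fun k _ ha _ hb =>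
    hinj k ha.1 hb.1 (ha.2.trans hb.2.symm)
  have hpiece : ∀ k, (f '' V k).indicator 1 y = Measure.count (V k ∩ f ⁻¹' {y}) := by
    intro k
    rcases (hfib k).eq_empty_or_singleton with h | ⟨x, hx⟩
    · have hy : y ∉ f '' V k := fun ⟨x, hxV, hxy⟩ => h.subset ⟨hxV, hxy⟩
      rw [h, indicator_of_notMem hy, measure_empty]
    · obtain ⟨hxV, hxy⟩ : x ∈ V k ∩ f ⁻¹' {y} := hx.symm ▸ mem_singleton x
      have hy : y ∈ f '' V k := ⟨x, hxV, hxy⟩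
      rw [hx, indicator_of_mem hy, Measure.count_singleton, Pi.one_apply]
  simp_rw [hpiece, iUnion_inter]
  exact (measure_iUnion (fun i j hij => (hd hij).mono inter_subset_left inter_subset_left)
    fun k => (hfib k).measurableSet).symm

theorem lintegral_abs_det_fderiv_mul_eq_lintegral_count_preimage_mul {E : Type*}
    [NormedAddCommGroup E] [NormedSpace ℝ E] [FiniteDimensional ℝ E] [MeasurableSpace E]
    [BorelSpace E] (μ : Measure E) [μ.IsAddHaarMeasure] {s : Set E} {f : E → E}
    {f' : E → E →L[ℝ] E} (hs : MeasurableSet s) (hf' : ∀ x ∈ s, HasFDerivWithinAt f (f' x) s x)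
    (hinj : ∀ x ∈ s, ∃ t ∈ 𝓝 x, InjOn f t) {φ : E → ℝ≥0∞} (hφ : Measurable φ) :
    ∫⁻ x in s, ENNReal.ofReal |(f' x).det| * φ (f x) ∂μ =
      ∫⁻ y, Measure.count (s ∩ f ⁻¹' {y}) * φ y ∂μ := by
  obtain ⟨V, hVm, hVd, rfl, hVinj⟩ := exists_measurable_partition_injOn hs hinj
  have hf'V : ∀ k, ∀ x ∈ V k, HasFDerivWithinAt f (f' x) (V k) x := fun k x hx =>
    (hf' x (mem_iUnion_of_mem k hx)).mono (subset_iUnion V k)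
  have himg : ∀ k, MeasurableSet (f '' V k) := fun k =>
    measurable_image_of_fderivWithin (hVm k) (hf'V k) (hVinj k)
  calc ∫⁻ x in ⋃ k, V k, ENNReal.ofReal |(f' x).det| * φ (f x) ∂μ
      = ∑' k, ∫⁻ y in f '' V k, φ y ∂μ := by
        rw [lintegral_iUnion hVm hVd]
        simp_rw [lintegral_image_eq_lintegral_abs_det_fderiv_mul μ (hVm _) (hf'V _) (hVinj _)]
    _ = ∑' k, ∫⁻ y, (f '' V k).indicator 1 y * φ y ∂μ := by
        simp_rw [← lintegral_indicator (himg _), ← indicator_mul_left, Pi.one_apply, one_mul]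
    _ = ∫⁻ y, Measure.count ((⋃ k, V k) ∩ f ⁻¹' {y}) * φ y ∂μ := by
        rw [← lintegral_tsum (f := fun k y => (f '' V k).indicator 1 y * φ y)
          fun k => ((measurable_one.indicator (himg k)).mul hφ).aemeasurable]
        simp_rw [ENNReal.tsum_mul_right, tsum_indicator_image_eq_count_preimage hVd hVinj]

namespace Polynomial

theorem card_roots_toFinset_eq_natDegree_of_simple {K : Type*} [Field K] [IsAlgClosed K]
    [DecidableEq K] {q : K[X]} (hq : ∀ a, q.IsRoot a → ¬ q.derivative.IsRoot a) :
    q.roots.toFinset.card = q.natDegree := by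
  rcases eq_or_ne q 0 with rfl | hq0
  · simp
  have hnodup : q.roots.Nodup := by
    refine Multiset.nodup_iff_count_le_one.2 fun a => ?_
    rw [count_roots, ← not_lt, one_lt_rootMultiplicity_iff_isRoot hq0]
    exact fun h => hq a h.1 h.2
  rw [Multiset.toFinset_card_of_nodup hnodup, (IsAlgClosed.splits q).natDegree_eq_card_roots]

theorem count_preimage_eval_eq_natDegree (p : ℂ[X]) {w : ℂ}
    (hw : ∀ u, p.eval u = w → p.derivative.eval u ≠ 0) :
    Measure.count ((fun u => p.eval u) ⁻¹' {w}) = p.natDegree := by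
  have hsimple : ∀ a, (p - C w).IsRoot a → ¬ (p - C w).derivative.IsRoot a := by
    intro a ha hda
    rw [IsRoot, eval_sub, eval_C, sub_eq_zero] at ha
    rw [derivative_sub, derivative_C, sub_zero] at hda
    exact hw a ha hda
  have hq0 : p - C w ≠ 0 := fun h => hsimple 0 (by simp [h]) (by simp [h])
  have hfiber : (fun u => p.eval u) ⁻¹' {w} = ↑(p - C w).roots.toFinset := by
    ext u
    simp [mem_roots hq0, sub_eq_zero]
  rw [hfiber, Measure.count_apply_finset, card_roots_toFinset_eq_natDegree_of_simple hsimple,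
    natDegree_sub_C]

end Polynomial

theorem HasStrictDerivAt.exists_mem_nhds_injOn {𝕜 : Type*} [NontriviallyNormedField 𝕜]
    [CompleteSpace 𝕜] {f : 𝕜 → 𝕜} {f' x : 𝕜} (hf : HasStrictDerivAt f f' x) (hf' : f' ≠ 0) :
    ∃ t ∈ 𝓝 x, InjOn f t := by
  have h := hf.hasStrictFDerivAt_equiv hf'
  exact ⟨_, (h.toOpenPartialHomeomorph f).open_source.mem_nhds
    h.mem_toOpenPartialHomeomorph_source, (h.toOpenPartialHomeomorph f).injOn⟩

theorem Complex.det_restrictScalars_smulRight_one (c : ℂ) :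
    ((ContinuousLinearMap.smulRight (1 : ℂ →L[ℂ] ℂ) c).restrictScalars ℝ).det =
      Complex.normSq c := by
  simp [ContinuousLinearMap.det, LinearMap.det_restrictScalars, Algebra.norm_complex_eq]

theorem stmt11_general (p : Polynomial ℂ) (n : ℕ)
    (hdeg : p.natDegree = n) (φ : ℂ → ENNReal) (hφ : Measurable φ) :
    ∫⁻ u : ℂ, φ (p.eval u) *
        ((‖(Polynomial.derivative p).eval u‖₊ : ENNReal)) ^ 2 ∂volume
      = (n : ENNReal) * ∫⁻ w : ℂ, φ w ∂volume := by
  set s : Set ℂ := {u | p.derivative.eval u ≠ 0}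
  let D : ℂ → ℂ →L[ℝ] ℂ := fun u =>
    ((1 : ℂ →L[ℂ] ℂ).smulRight (p.derivative.eval u)).restrictScalars ℝ
  have hD : ∀ u, HasFDerivAt (fun z => p.eval z) (D u) u := fun u =>
    (p.hasDerivAt u).hasFDerivAt.restrictScalars ℝ
  have hjac : ∀ u, ENNReal.ofReal |(D u).det| = ‖p.derivative.eval u‖₊ ^ 2 := fun u => by
    rw [Complex.det_restrictScalars_smulRight_one, abs_of_nonneg (Complex.normSq_nonneg _),
      Complex.normSq_eq_norm_sq, ENNReal.ofReal_pow (norm_nonneg _), ofReal_norm, enorm_eq_nnnorm]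
  have hcrit : volume ((fun u => p.eval u) '' sᶜ) = 0 :=
    addHaar_image_eq_zero_of_det_fderivWithin_eq_zero volume
      (fun u _ => (hD u).hasFDerivWithinAt) fun u hu => by
        rw [Complex.det_restrictScalars_smulRight_one, Complex.normSq_eq_zero, not_not.1 hu]
  calc ∫⁻ u, φ (p.eval u) * ‖p.derivative.eval u‖₊ ^ 2
      = ∫⁻ u in s, ENNReal.ofReal |(D u).det| * φ (p.eval u) := by
        simp_rw [hjac, mul_comm (φ _)]
        refine (setLIntegral_eq_of_support_subset (support_subset_iff'.2 fun u hu => ?_)).symm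
        simp [not_not.1 hu]
    _ = ∫⁻ w, Measure.count (s ∩ (fun u => p.eval u) ⁻¹' {w}) * φ w :=
        lintegral_abs_det_fderiv_mul_eq_lintegral_count_preimage_mul volume
          (isOpen_ne_fun p.derivative.continuous continuous_const).measurableSet
          (fun u _ => (hD u).hasFDerivWithinAt)
          (fun u hu => (p.hasStrictDerivAt u).exists_mem_nhds_injOn hu) hφ
    _ = ∫⁻ w, n * φ w := by
        refine lintegral_congr_ae ((measure_eq_zero_iff_ae_notMem.1 hcrit).mono fun w hw => ?_)
        have hfiber : (fun u => p.eval u) ⁻¹' {w} ⊆ s := fun u hu =>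
          by_contra fun h => hw ⟨u, h, hu⟩
        dsimp only
        rw [inter_eq_right.2 hfiber, p.count_preimage_eval_eq_natDegree fun u => @hfiber u, hdeg]
    _ = n * ∫⁻ w, φ w := lintegral_const_mul _ hφ

/-- for a polynomial `p : ℂ → ℂ` of degree `n ≥ 1` and a
measurable `φ : ℂ → [0,∞]`,
`∫_ℂ φ(p(u))·|p'(u)|² dλ(u) = n·∫_ℂ φ(w) dλ(w)`,
where `λ` is Lebesgue measure on `ℂ` and `|p'(u)|²` is the real Jacobian of
`p` viewed as a map `ℝ² → ℝ²`. -/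
theorem stmt11 (p : Polynomial ℂ) (n : ℕ) (hn : 1 ≤ n)
    (hdeg : p.natDegree = n) (φ : ℂ → ENNReal) (hφ : Measurable φ) :
    ∫⁻ u : ℂ, φ (p.eval u) *
        ((‖(Polynomial.derivative p).eval u‖₊ : ENNReal)) ^ 2 ∂volume
      = (n : ENNReal) * ∫⁻ w : ℂ, φ w ∂volume :=
  stmt11_general p n hdeg φ hφ
end

section
/- Let G(Z,W) = Σ_{(i,j)∈S} c_{ij} Z^i W^j ∈ ℂ[Z,W] be a nonzero polynomial with support S (so c_{ij} ≠ 0 for (i,j) ∈ S), let (s,t) ∈ S, and let 0 < e ≤ e' be real numbers. Assume that for every (i,j) ∈ S with (i,j) ≠ (s,t): if i > s then i·e + j ≥ s·e + t; if i < s then i·e' + j ≥ s·e' + t; and if i = s then j > t. Then for every ε > 0 there exist R > 0, δ > 0 and η > 0 such that for all (Z,W) ∈ ℂ² with 0 < |W| < η and R·|W|^{e'} ≤ |Z| ≤ δ·|W|^{e}, one has (|c_{st}| − ε)·|Z|^s·|W|^t ≤ |G(Z,W)| ≤ (|c_{st}| + ε)·|Z|^s·|W|^t. -/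
/-!
In the horn `A⁻¹|W|^{e'} ≤ |Z| ≤ A|W|^{e}`, `|W| ≤ A ≤ 1`, every other monomial of the support
satisfies `|Z|^i|W|^j ≤ A·|Z|^s|W|^t`: writing `|Z|^i|W|^j = |Z|^s|W|^t · |Z|^{i-s}|W|^{j-t}`,
the upper edge of the horn bounds the second factor by `A^{i-s}` when `i > s`, the lower edge by
`A^{s-i}` when `i < s` (the slope conditions absorb the leftover power of `|W|`), and when `i = s`
it is `|W|^{j-t} ≤ |W|`. Taking `A` small compared with `ε / ∑ |c_p|` makes the tail negligible.
-/

open Finset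

section Horn

variable {z w : ℝ}

theorem rpow_mul_rpow_le_rpow_of_le_mul_rpow {δ e a b : ℝ} (hz : 0 < z) (hw : 0 < w)
    (hw1 : w ≤ 1) (hδ : 0 ≤ δ) (hzδ : z ≤ δ * w ^ e) (ha : 0 ≤ a) (hab : 0 ≤ e * a + b) :
    z ^ a * w ^ b ≤ δ ^ a :=
  calc z ^ a * w ^ b ≤ (δ * w ^ e) ^ a * w ^ b := by gcongr
    _ = δ ^ a * w ^ (e * a + b) := by
      rw [Real.mul_rpow hδ (by positivity), ← Real.rpow_mul hw.le, Real.rpow_add hw, mul_assoc]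
    _ ≤ δ ^ a * 1 := by gcongr; exact Real.rpow_le_one hw.le hw1 hab
    _ = δ ^ a := mul_one _

theorem rpow_mul_rpow_le_rpow_of_mul_rpow_le {R e a b : ℝ} (hw : 0 < w) (hw1 : w ≤ 1)
    (hR : 0 < R) (hRz : R * w ^ e ≤ z) (ha : a ≤ 0) (hab : 0 ≤ e * a + b) :
    z ^ a * w ^ b ≤ R ^ a :=
  calc z ^ a * w ^ b ≤ (R * w ^ e) ^ a * w ^ b := by
        exact mul_le_mul_of_nonneg_right
          (Real.rpow_le_rpow_of_nonpos (by positivity) hRz ha) (by positivity)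
    _ = R ^ a * w ^ (e * a + b) := by
      rw [Real.mul_rpow hR.le (by positivity), ← Real.rpow_mul hw.le, Real.rpow_add hw, mul_assoc]
    _ ≤ R ^ a * 1 := by gcongr; exact Real.rpow_le_one hw.le hw1 hab
    _ = R ^ a := mul_one _

theorem pow_mul_pow_le_mul_of_horn {A e e' : ℝ} {i j s t : ℕ} (hz : 0 < z) (hw : 0 < w)
    (hwA : w ≤ A) (hA1 : A ≤ 1) (hzu : z ≤ A * w ^ e) (hzl : A⁻¹ * w ^ e' ≤ z)
    (h₁ : s < i → (s : ℝ) * e + t ≤ i * e + j) (h₂ : i < s → (s : ℝ) * e' + t ≤ i * e' + j)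
    (h₃ : i = s → t < j) :
    z ^ i * w ^ j ≤ A * (z ^ s * w ^ t) := by
  have hA : 0 < A := hw.trans_le hwA
  have hsplit : z ^ i * w ^ j = z ^ s * w ^ t * (z ^ ((i : ℝ) - s) * w ^ ((j : ℝ) - t)) := by
    simp only [Real.rpow_sub hz, Real.rpow_sub hw, Real.rpow_natCast]
    field_simp
  rw [hsplit, mul_comm A]
  gcongr
  rcases lt_trichotomy i s with h | rfl | h
  · have hsi : (i : ℝ) + 1 ≤ s := by exact_mod_cast h
    calc z ^ ((i : ℝ) - s) * w ^ ((j : ℝ) - t) ≤ A⁻¹ ^ ((i : ℝ) - s) :=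
          rpow_mul_rpow_le_rpow_of_mul_rpow_le hw (hwA.trans hA1) (inv_pos.2 hA) hzl
            (by linarith) (by linarith [h₂ h])
      _ = A ^ ((s : ℝ) - i) := by rw [Real.inv_rpow hA.le, ← Real.rpow_neg hA.le, neg_sub]
      _ ≤ A ^ (1 : ℝ) := Real.rpow_le_rpow_of_exponent_ge hA hA1 (by linarith)
      _ = A := Real.rpow_one A
  · have htj : (t : ℝ) + 1 ≤ j := by exact_mod_cast h₃ rfl
    calc z ^ ((i : ℝ) - i) * w ^ ((j : ℝ) - t) = w ^ ((j : ℝ) - t) := by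
          rw [sub_self, Real.rpow_zero, one_mul]
      _ ≤ w ^ (1 : ℝ) := Real.rpow_le_rpow_of_exponent_ge hw (hwA.trans hA1) (by linarith)
      _ = w := Real.rpow_one w
      _ ≤ A := hwA
  · have hsi : (s : ℝ) + 1 ≤ i := by exact_mod_cast h
    calc z ^ ((i : ℝ) - s) * w ^ ((j : ℝ) - t) ≤ A ^ ((i : ℝ) - s) :=
          rpow_mul_rpow_le_rpow_of_le_mul_rpow hz hw (hwA.trans hA1) hA.le hzu
            (by linarith) (by linarith [h₁ h])
      _ ≤ A ^ (1 : ℝ) := Real.rpow_le_rpow_of_exponent_ge hA hA1 (by linarith)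
      _ = A := Real.rpow_one A

end Horn

theorem norm_sum_sub_le_of_norm_le_on_erase {ι E : Type*} [DecidableEq ι]
    [SeminormedAddCommGroup E] {S : Finset ι} {f : ι → E} {g : ι → ℝ} {x : ι} (hx : x ∈ S)
    (hg : ∀ p ∈ S, 0 ≤ g p) (hfg : ∀ p ∈ S.erase x, ‖f p‖ ≤ g p) :
    ‖∑ p ∈ S, f p - f x‖ ≤ ∑ p ∈ S, g p :=
  calc ‖∑ p ∈ S, f p - f x‖ = ‖∑ p ∈ S.erase x, f p‖ := by rw [sum_erase_eq_sub hx]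
    _ ≤ ∑ p ∈ S.erase x, g p := (norm_sum_le _ _).trans (sum_le_sum hfg)
    _ ≤ ∑ p ∈ S, g p := sum_le_sum_of_subset_of_nonneg (erase_subset x S) fun p hp _ => hg p hp

theorem stmt13_general (S : Finset (ℕ × ℕ)) (c : ℕ × ℕ → ℂ)
    (G : ℂ → ℂ → ℂ)
    (hG : ∀ Z W : ℂ, G Z W = ∑ p ∈ S, c p * Z ^ p.1 * W ^ p.2)
    (s t : ℕ) (hst : (s, t) ∈ S)
    (e e' : ℝ)
    (hcond : ∀ p ∈ S, p ≠ (s, t) →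
      (s < p.1 → (s : ℝ) * e + t ≤ (p.1 : ℝ) * e + p.2) ∧
      (p.1 < s → (s : ℝ) * e' + t ≤ (p.1 : ℝ) * e' + p.2) ∧
      (p.1 = s → t < p.2)) :
    ∀ ε > (0 : ℝ), ∃ R > (0 : ℝ), ∃ δ > (0 : ℝ), ∃ η > (0 : ℝ),
      ∀ Z W : ℂ, 0 < ‖W‖ → ‖W‖ < η →
        R * ‖W‖ ^ e' ≤ ‖Z‖ →
        ‖Z‖ ≤ δ * ‖W‖ ^ e →
        (‖c (s, t)‖ - ε) * ‖Z‖ ^ s * ‖W‖ ^ t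
            ≤ ‖G Z W‖ ∧
          ‖G Z W‖
            ≤ (‖c (s, t)‖ + ε) * ‖Z‖ ^ s *
                ‖W‖ ^ t := by
  intro ε hε
  set C := ∑ p ∈ S, ‖c p‖
  have hC : 0 ≤ C := sum_nonneg fun p _ => norm_nonneg (c p)
  set A := min 1 (ε / (C + 1))
  have hA : 0 < A := lt_min one_pos (by positivity)
  have hCA : C * A ≤ ε :=
    calc C * A ≤ C * (ε / (C + 1)) := by gcongr; exact min_le_right _ _
      _ ≤ ε := by rw [mul_div_assoc', div_le_iff₀ (by positivity)]; nlinarith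
  refine ⟨A⁻¹, inv_pos.2 hA, A, hA, A, hA, fun Z W hW hWA hZl hZu => ?_⟩
  have hZ : 0 < ‖Z‖ := lt_of_lt_of_le (by positivity) hZl
  have hterm : ∀ p ∈ S.erase (s, t),
      ‖c p * Z ^ p.1 * W ^ p.2‖ ≤ ‖c p‖ * A * (‖Z‖ ^ s * ‖W‖ ^ t) := by
    intro p hp
    obtain ⟨h₁, h₂, h₃⟩ := hcond p (mem_of_mem_erase hp) (ne_of_mem_erase hp)
    rw [norm_mul, norm_mul, norm_pow, norm_pow, mul_assoc, mul_assoc ‖c p‖]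
    exact mul_le_mul_of_nonneg_left
      (pow_mul_pow_le_mul_of_horn hZ hW hWA.le (min_le_left _ _) hZu hZl h₁ h₂ h₃) (norm_nonneg _)
  have htail : ‖G Z W - c (s, t) * Z ^ s * W ^ t‖ ≤ ε * (‖Z‖ ^ s * ‖W‖ ^ t) :=
    calc ‖G Z W - c (s, t) * Z ^ s * W ^ t‖
        ≤ ∑ p ∈ S, ‖c p‖ * A * (‖Z‖ ^ s * ‖W‖ ^ t) := by
          rw [hG]; exact norm_sum_sub_le_of_norm_le_on_erase hst (fun p _ => by positivity) hterm
      _ = C * A * (‖Z‖ ^ s * ‖W‖ ^ t) := by rw [← sum_mul, ← sum_mul]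
      _ ≤ ε * (‖Z‖ ^ s * ‖W‖ ^ t) := by gcongr
  have hdiff := abs_le.1 ((abs_norm_sub_norm_le _ _).trans htail)
  rw [norm_mul, norm_mul, norm_pow, norm_pow] at hdiff
  constructor <;> linarith [hdiff.1, hdiff.2]

/-- Vertex Lemma: let `G(Z,W) = Σ_{(i,j)∈S} c_{ij} Z^i W^j` be
a nonzero polynomial with support `S`, let `(s,t) ∈ S`, and let
`0 < e ≤ e'`.  Assume every other `(i,j) ∈ S` satisfies: `i·e + j ≥ s·e + t`
if `i > s`; `i·e' + j ≥ s·e' + t` if `i < s`; and `j > t` if `i = s`.  Then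
for every `ε > 0` there are `R, δ, η > 0` such that in the horn region
`0 < |W| < η`, `R|W|^{e'} ≤ |Z| ≤ δ|W|^{e}` one has
`(|c_{st}| − ε)|Z|^s|W|^t ≤ |G(Z,W)| ≤ (|c_{st}| + ε)|Z|^s|W|^t`. -/
theorem stmt13 (S : Finset (ℕ × ℕ)) (c : ℕ × ℕ → ℂ)
    (hc : ∀ p ∈ S, c p ≠ 0) (hS : S.Nonempty)
    (G : ℂ → ℂ → ℂ)
    (hG : ∀ Z W : ℂ, G Z W = ∑ p ∈ S, c p * Z ^ p.1 * W ^ p.2)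
    (s t : ℕ) (hst : (s, t) ∈ S)
    (e e' : ℝ) (he : 0 < e) (hee' : e ≤ e')
    (hcond : ∀ p ∈ S, p ≠ (s, t) →
      (s < p.1 → (s : ℝ) * e + t ≤ (p.1 : ℝ) * e + p.2) ∧
      (p.1 < s → (s : ℝ) * e' + t ≤ (p.1 : ℝ) * e' + p.2) ∧
      (p.1 = s → t < p.2)) :
    ∀ ε > (0 : ℝ), ∃ R > (0 : ℝ), ∃ δ > (0 : ℝ), ∃ η > (0 : ℝ),
      ∀ Z W : ℂ, 0 < ‖W‖ → ‖W‖ < η →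
        R * ‖W‖ ^ e' ≤ ‖Z‖ →
        ‖Z‖ ≤ δ * ‖W‖ ^ e →
        (‖c (s, t)‖ - ε) * ‖Z‖ ^ s * ‖W‖ ^ t
            ≤ ‖G Z W‖ ∧
          ‖G Z W‖
            ≤ (‖c (s, t)‖ + ε) * ‖Z‖ ^ s *
                ‖W‖ ^ t :=
  stmt13_general S c G hG s t hst e e' hcond
end
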